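/- arXiv:2604.12790 — 6 statements merged into one kernel-verified Lean document; each statement's English description precedes it below -/
import Mathlib

section
/- Let β > 0 and γ < 0 with γ ≠ −1/2. Set θ := 1 + 1/(2γ), N_s := (β/(1−γ))^{1/2}, c_s := ((1−2γ)/4)·N_s, and define F_s(y) := c_s·(1+γy)^{−θ} for 0 < y < −1/γ and F_s(y) := 0 for y ≥ −1/γ, so that F_s has bounded support. Then F_s satisfies (1+γy)·F_s′(y) + (γ + 1/2)·F_s(y) = 0 for all y ∈ (0, −1/γ), the function y ↦ y·F_s(y) is integrable on (0,∞) with ∫_0^∞ y·F_s(y) dy = N_s, and the self-consistency relation γ = 1 − β/N_s² holds. -/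
open Real MeasureTheory Set

/-- the compactly supported profile for `γ < 0`, `γ ≠ -1/2`:
`F_s(y) = c_s (1+γy)^{-θ}` for `0 < y < -1/γ` and `F_s(y) = 0` for `y ≥ -1/γ`
solves `(1+γy)F_s' + (γ+1/2)F_s = 0` on `(0,-1/γ)`, has integrable first moment
equal to `N_s = (β/(1-γ))^{1/2}`, and `γ = 1 - β/N_s²`. -/
theorem selfsimilar_profile_compact_support
    (β γ : ℝ) (hβ : 0 < β) (hγ : γ < 0) (hγ' : γ ≠ -(1 / 2))
    (θ Ns cs : ℝ)
    (hθ : θ = 1 + 1 / (2 * γ))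
    (hNs : Ns = Real.sqrt (β / (1 - γ)))
    (hcs : cs = (1 - 2 * γ) / 4 * Ns)
    (Fs : ℝ → ℝ)
    (hFs : ∀ y : ℝ, Fs y = if y < -1 / γ then cs * (1 + γ * y) ^ (-θ) else 0) :
    (∀ y ∈ Set.Ioo (0 : ℝ) (-1 / γ),
      (1 + γ * y) * deriv Fs y + (γ + 1 / 2) * Fs y = 0) ∧
    IntegrableOn (fun y => y * Fs y) (Set.Ioi (0 : ℝ)) ∧
    (∫ y in Set.Ioi (0 : ℝ), y * Fs y) = Ns ∧
    γ = 1 - β / Ns ^ 2 := by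
  have hγ0 : γ ≠ 0 := hγ.ne
  set L : ℝ := -1 / γ with hLdef
  have hL : 0 < L := div_pos_of_neg_of_neg (by norm_num) hγ
  have h1γ : (0:ℝ) < 1 - γ := by linarith
  have h12γ : (0:ℝ) < 1 - 2 * γ := by linarith
  have hNspos : 0 < Ns := by
    rw [hNs]; exact Real.sqrt_pos.mpr (div_pos hβ h1γ)
  have hNssq : Ns ^ 2 = β / (1 - γ) := by
    rw [hNs, sq_sqrt (div_pos hβ h1γ).le]
  have hθ1 : 1 - θ > 0 := by
    rw [hθ]
    have : 1 / (2 * γ) < 0 := div_neg_of_pos_of_neg one_pos (by linarith)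
    linarith
  have hθγ : θ * γ = γ + 1 / 2 := by
    rw [hθ]; field_simp
  -- positivity of 1 + γ y on the interval
  have hu : ∀ y ∈ Set.Ioo (0:ℝ) L, 0 < 1 + γ * y := by
    intro y hy
    have h1 : γ * L < γ * y := mul_lt_mul_of_neg_left hy.2 hγ
    have h2 : γ * L = -1 := by rw [hLdef]; field_simp
    linarith
  -- ODE part
  have hODE : ∀ y ∈ Set.Ioo (0 : ℝ) L,
      (1 + γ * y) * deriv Fs y + (γ + 1 / 2) * Fs y = 0 := by
    intro y hy
    have huy := hu y hy
    have hev : Fs =ᶠ[nhds y] fun z => cs * (1 + γ * z) ^ (-θ) := by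
      filter_upwards [Iio_mem_nhds hy.2] with z hz
      rw [hFs z, if_pos (show z < L from hz)]
    have h1 : HasDerivAt (fun z : ℝ => 1 + γ * z) γ y := by
      simpa using ((hasDerivAt_id y).const_mul γ).const_add 1
    have hd : HasDerivAt (fun z => cs * (1 + γ * z) ^ (-θ))
        (cs * (γ * (-θ) * (1 + γ * y) ^ (-θ - 1))) y :=
      (h1.rpow_const (Or.inl huy.ne')).const_mul cs
    rw [hev.deriv_eq, hd.deriv, hFs y, if_pos hy.2]
    have hpow : (1 + γ * y) * (1 + γ * y) ^ (-θ - 1) = (1 + γ * y) ^ (-θ) := by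
      have h := Real.rpow_add huy 1 (-θ - 1)
      rw [Real.rpow_one] at h
      rw [show (1 + (-θ - 1)) = -θ by ring] at h
      exact h.symm
    linear_combination (-cs * θ * γ) * hpow + (-cs * (1 + γ * y) ^ (-θ)) * hθγ
  -- integrability pieces
  have hbase : ∀ e : ℝ, -1 < e →
      IntervalIntegrable (fun y => (1 + γ * y) ^ e) volume 0 L := by
    intro e he
    have h0 : IntervalIntegrable (fun x : ℝ => x ^ e) volume 1 0 :=
      intervalIntegral.intervalIntegrable_rpow' he
    have h1 := (h0.comp_add_left 1).comp_mul_left (c := γ)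
    simpa [zero_div] using h1
  have hintq := hbase (1 - θ) (by linarith)
  have hintp := hbase (-θ) (by linarith)
  set g : ℝ → ℝ := fun y => cs / γ * ((1 + γ * y) ^ (1 - θ) - (1 + γ * y) ^ (-θ))
    with hgdef
  have hgint : IntervalIntegrable g volume 0 L := (hintq.sub hintp).const_mul _
  have hfg : ∀ y ∈ Set.Ioo (0:ℝ) L, y * Fs y = g y := by
    intro y hy
    have huy := hu y hy
    have hpow : (1 + γ * y) ^ (1 - θ) = (1 + γ * y) * (1 + γ * y) ^ (-θ) := by
      have h := Real.rpow_add huy 1 (-θ)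
      rw [Real.rpow_one] at h
      rw [show (1 + -θ) = 1 - θ by ring] at h
      exact h
    rw [hFs y, if_pos hy.2, hgdef]
    simp only
    rw [hpow]
    field_simp
    ring
  have hIoo : IntegrableOn (fun y => y * Fs y) (Set.Ioo 0 L) := by
    have : IntegrableOn g (Set.Ioc 0 L) :=
      (intervalIntegrable_iff_integrableOn_Ioc_of_le hL.le).mp hgint
    exact (this.mono_set Set.Ioo_subset_Ioc_self).congr_fun (fun y hy => (hfg y hy).symm) measurableSet_Ioo
  have hzero : ∀ y ∈ Set.Ici L, y * Fs y = 0 := by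
    intro y hy
    rw [hFs y, if_neg (not_lt.mpr hy), mul_zero]
  have hIci : IntegrableOn (fun y => y * Fs y) (Set.Ici L) := by
    exact (integrableOn_zero (s := Set.Ici L)).congr_fun
      (fun y hy => (hzero y hy).symm) measurableSet_Ici
  have hunion : Set.Ioi (0:ℝ) = Set.Ioo 0 L ∪ Set.Ici L := (Ioo_union_Ici_eq_Ioi hL).symm
  have hdisj : Disjoint (Set.Ioo (0:ℝ) L) (Set.Ici L) :=
    Set.disjoint_left.mpr fun x hx hx' => absurd hx.2 (not_lt.mpr hx')
  have hInt : IntegrableOn (fun y => y * Fs y) (Set.Ioi (0 : ℝ)) := by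
    rw [hunion]; exact hIoo.union hIci
  -- value of the elementary integrals
  have helem : ∀ e : ℝ, -1 < e →
      (∫ y in (0:ℝ)..L, (1 + γ * y) ^ e) = -1 / (γ * (e + 1)) := by
    intro e he
    have he1 : e + 1 ≠ 0 := by linarith
    have h1 : (∫ y in (0:ℝ)..L, ((fun x : ℝ => x ^ e) (γ * y + 1)))
        = γ⁻¹ • ∫ x in (γ * 0 + 1)..(γ * L + 1), (fun x : ℝ => x ^ e) x :=
      intervalIntegral.integral_comp_mul_add (fun x : ℝ => x ^ e) hγ0 1
    have hLval : γ * L + 1 = 0 := by rw [hLdef]; field_simp; ring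
    have h2 : (∫ x in (1:ℝ)..0, x ^ e) = -1 / (e + 1) := by
      rw [integral_rpow (Or.inl he)]
      rw [Real.zero_rpow he1, Real.one_rpow]
      ring
    have h3 : (∫ y in (0:ℝ)..L, (1 + γ * y) ^ e) =
        ∫ y in (0:ℝ)..L, ((fun x : ℝ => x ^ e) (γ * y + 1)) := by
      congr 1; ext y; rw [add_comm]
    rw [h3, h1, hLval, mul_zero, zero_add, h2]
    rw [smul_eq_mul]
    field_simp
  -- value of the moment integral
  have h1θ : (1:ℝ) - θ ≠ 0 := hθ1.ne'
  have h2θ : (2:ℝ) - θ ≠ 0 := by linarith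
  have hval : (∫ y in Set.Ioi (0 : ℝ), y * Fs y) = Ns := by
    rw [hunion, setIntegral_union hdisj measurableSet_Ici hIoo hIci]
    rw [setIntegral_congr_fun measurableSet_Ici hzero]
    rw [setIntegral_congr_fun measurableSet_Ioo hfg]
    rw [← integral_Ioc_eq_integral_Ioo,
      ← intervalIntegral.integral_of_le hL.le]
    have : (∫ y in (0:ℝ)..L, g y) =
        cs / γ * ((∫ y in (0:ℝ)..L, (1 + γ * y) ^ (1 - θ)) -
          ∫ y in (0:ℝ)..L, (1 + γ * y) ^ (-θ)) := by
      rw [← intervalIntegral.integral_sub hintq hintp,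
        ← intervalIntegral.integral_const_mul]
    rw [this, helem (1 - θ) (by linarith), helem (-θ) (by linarith)]
    have hq1 : (1:ℝ) - θ + 1 = 2 - θ := by ring
    have hp1 : -θ + 1 = 1 - θ := by ring
    rw [hq1, hp1]
    have hsub : θ = 1 + 1 / (2 * γ) := hθ
    simp only [integral_zero, add_zero]
    have hden : (-γ + γ ^ 2 * 2 : ℝ) ≠ 0 := by
      rw [show (-γ + γ ^ 2 * 2 : ℝ) = γ * (2 * γ - 1) by ring]
      exact mul_ne_zero hγ0 (by linarith)
    rw [hcs, hsub]
    field_simp [hden]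
    have hc : (-γ + γ ^ 2 * 2) * (-γ + γ ^ 2 * 2)⁻¹ = 1 := mul_inv_cancel₀ hden
    have hd2 : (2 ^ 2 * γ - (2 * γ + 1) : ℝ) ≠ 0 := (by linarith : (2 ^ 2 * γ - (2 * γ + 1) : ℝ) < 0).ne
    field_simp
    ring
  refine ⟨hODE, hInt, hval, ?_⟩
  rw [hNssq]
  field_simp
  ring
end

section
/- Let β > 0, γ ∈ (0,1/2), θ := 1 + 1/(2γ), N_s := (β/(1−γ))^{1/2}, c_s := ((1−2γ)/4)·N_s, F_s(y) := c_s·(1+γy)^{−θ}. Let τ_0 ≥ 0 and c_J, η > 0, and let J : [τ_0,∞) → ℝ be continuous with |J(τ)| ≤ c_J·e^{−η(τ−τ_0)} for all τ ≥ τ_0. For τ ≥ r ≥ τ_0 define M′(τ, r) := exp(∫_r^τ (γ + J(ω)) dω), M(τ, r) := ∫_r^τ M′(ρ, r) dρ, and (T̃(τ,r)Ψ)(y) := e^{(τ−r)/2}·M′(τ,r)·Ψ(M′(τ,r)·y + M(τ,r)), and set c_m := e^{c_J/η}. Then for all τ ≥ r ≥ τ_0: (i) c_m^{−1}·e^{γ(τ−r)}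 ≤ M′(τ, r) ≤ c_m·e^{γ(τ−r)}; (ii) c_m^{−1}·γ^{−1}·(e^{γ(τ−r)} − 1) ≤ M(τ, r) ≤ c_m·γ^{−1}·(e^{γ(τ−r)} − 1); and (iii) there exists c(γ,η) > 0 depending only on γ and η such that (2β/N_s³)·∫_0^∞ y·(T̃(τ,r) (d/dy)(y·F_s(y)))(y) dy = −((1−γ)/γ)·(1 − (1−2γ)·e^{−γ(τ−r)} + Δ_1(r)) with |Δ_1(r)| ≤ c(γ,η)·c_J. -/
open Real MeasureTheory Set intervalIntegral

section SelfSimilarAux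
open Filter

lemma aux_affine_hasDerivAt (c d y : ℝ) : HasDerivAt (fun y : ℝ => c * y + d) c y := by
  simpa using ((hasDerivAt_id y).const_mul c).add_const d

lemma aux_rpow_affine_hasDerivAt (c d p y : ℝ) (h : 0 < c * y + d) :
    HasDerivAt (fun y : ℝ => (c * y + d) ^ p) (c * p * (c * y + d) ^ (p - 1)) y :=
  (aux_affine_hasDerivAt c d y).rpow_const (Or.inl (ne_of_gt h))

lemma aux_tendsto_rpow_affine (c d p : ℝ) (hc : 0 < c) (hp : p < 0) :
    Tendsto (fun y : ℝ => (c * y + d) ^ p) atTop (nhds 0) := by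
  have h1 : Tendsto (fun y : ℝ => c * y + d) atTop atTop :=
    (tendsto_id.const_mul_atTop hc).atTop_add tendsto_const_nhds
  have h2 : Tendsto (fun x : ℝ => x ^ (-(-p))) atTop (nhds 0) :=
    tendsto_rpow_neg_atTop (by linarith)
  have := h2.comp h1
  simp only [neg_neg] at this
  exact this

lemma aux_I1 (γ θ a b : ℝ) (hγ : 0 < γ) (hθ : 2 < θ) (ha : 0 < a) (hb : 0 ≤ b) :
    IntegrableOn (fun y : ℝ => y * (γ * a * y + (1 + γ * b)) ^ (-θ)) (Ioi 0) volume ∧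
    ∫ y in Ioi (0:ℝ), y * (γ * a * y + (1 + γ * b)) ^ (-θ)
      = (1 + γ * b) ^ (2 - θ) * (1 / (1 - θ) - 1 / (2 - θ)) / (γ * a) ^ 2 := by
  set c := γ * a with hcdef
  set A := 1 + γ * b with hAdef
  have hc : 0 < c := mul_pos hγ ha
  have hA : 0 < A := by have : 0 ≤ γ * b := mul_nonneg hγ.le hb; simp [hAdef]; linarith
  have hd1 : (2:ℝ) - θ ≠ 0 := by linarith
  have hd2 : (1:ℝ) - θ ≠ 0 := by linarith
  set H : ℝ → ℝ := fun y => ((c * y + A) ^ (2 - θ) / (2 - θ)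
      - A * ((c * y + A) ^ (1 - θ) / (1 - θ))) / c ^ 2 with hHdef
  have hV : ∀ y : ℝ, 0 ≤ y → 0 < c * y + A := by
    intro y hy; have : 0 ≤ c * y := mul_nonneg hc.le hy; linarith
  have hderiv : ∀ y ∈ Ioi (0:ℝ), HasDerivAt H (y * (c * y + A) ^ (-θ)) y := by
    intro y hy
    have hVy : 0 < c * y + A := hV y (le_of_lt hy)
    have h1 := (aux_rpow_affine_hasDerivAt c A (2 - θ) y hVy).div_const (2 - θ)
    have h2 := ((aux_rpow_affine_hasDerivAt c A (1 - θ) y hVy).div_const (1 - θ)).const_mul A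
    have h3 := (h1.sub h2).div_const (c ^ 2)
    refine h3.congr_deriv ?_
    have e3 : (c * y + A) ^ ((1:ℝ) - θ) = (c * y + A) * (c * y + A) ^ (-θ) := by
      rw [show (1:ℝ) - θ = 1 + (-θ) by ring, Real.rpow_add hVy, Real.rpow_one]
    rw [show (2:ℝ) - θ - 1 = 1 - θ by ring, show (1:ℝ) - θ - 1 = -θ by ring, e3]
    field_simp
    ring
  have hcont : ContinuousWithinAt H (Ici 0) 0 := by
    have hV0 : 0 < c * 0 + A := hV 0 le_rfl
    have h1 := (aux_rpow_affine_hasDerivAt c A (2 - θ) 0 hV0).div_const (2 - θ)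
    have h2 := ((aux_rpow_affine_hasDerivAt c A (1 - θ) 0 hV0).div_const (1 - θ)).const_mul A
    exact (((h1.sub h2).div_const (c ^ 2)).continuousAt).continuousWithinAt
  have hnonneg : ∀ y ∈ Ioi (0:ℝ), 0 ≤ y * (c * y + A) ^ (-θ) := by
    intro y hy
    exact mul_nonneg (le_of_lt hy) (Real.rpow_nonneg (hV y (le_of_lt hy)).le _)
  have hlim : Filter.Tendsto H Filter.atTop (nhds 0) := by
    have t1 := (aux_tendsto_rpow_affine c A (2 - θ) hc (by linarith)).div_const (2 - θ)
    have t2 := ((aux_tendsto_rpow_affine c A (1 - θ) hc (by linarith)).div_const (1 - θ)).const_mul A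
    have := (t1.sub t2).div_const (c ^ 2)
    simpa [hHdef] using this
  refine ⟨integrableOn_Ioi_deriv_of_nonneg hcont hderiv hnonneg hlim, ?_⟩
  rw [integral_Ioi_of_hasDerivAt_of_nonneg hcont hderiv hnonneg hlim]
  have hA2 : A ^ ((2:ℝ) - θ) = A * A ^ ((1:ℝ) - θ) := by
    rw [show (2:ℝ) - θ = 1 + (1 - θ) by ring, Real.rpow_add hA, Real.rpow_one]
  simp only [hHdef, mul_zero, zero_add]
  rw [hA2]
  field_simp
  ring

lemma aux_I2 (γ θ a b : ℝ) (hγ : 0 < γ) (hθ : 2 < θ) (ha : 0 < a) (hb : 0 ≤ b) :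
    IntegrableOn (fun y : ℝ => y * (a * y + b) * (γ * a * y + (1 + γ * b)) ^ (-θ - 1)) (Ioi 0) volume ∧
    ∫ y in Ioi (0:ℝ), y * (a * y + b) * (γ * a * y + (1 + γ * b)) ^ (-θ - 1)
      = -(((1 + γ * b) ^ (2 - θ) / (2 - θ) - (1 + γ * b + 1) * ((1 + γ * b) ^ (1 - θ) / (1 - θ))
          - (1 + γ * b) ^ (1 - θ) / θ) / (γ * (γ * a) ^ 2)) := by
  set c := γ * a with hcdef
  set A := 1 + γ * b with hAdef
  have hc : 0 < c := mul_pos hγ ha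
  have hA : 0 < A := by have : 0 ≤ γ * b := mul_nonneg hγ.le hb; simp [hAdef]; linarith
  have hd1 : (2:ℝ) - θ ≠ 0 := by linarith
  have hd2 : (1:ℝ) - θ ≠ 0 := by linarith
  have hd3 : θ ≠ 0 := by linarith
  set H : ℝ → ℝ := fun y => ((c * y + A) ^ (2 - θ) / (2 - θ)
      - (A + 1) * ((c * y + A) ^ (1 - θ) / (1 - θ)) - A * ((c * y + A) ^ (-θ) / θ)) / (γ * c ^ 2)
    with hHdef
  have hV : ∀ y : ℝ, 0 ≤ y → 0 < c * y + A := by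
    intro y hy; have : 0 ≤ c * y := mul_nonneg hc.le hy; linarith
  have hderiv : ∀ y ∈ Ioi (0:ℝ),
      HasDerivAt H (y * (a * y + b) * (c * y + A) ^ (-θ - 1)) y := by
    intro y hy
    have hVy : 0 < c * y + A := hV y (le_of_lt hy)
    have h1 := (aux_rpow_affine_hasDerivAt c A (2 - θ) y hVy).div_const (2 - θ)
    have h2 := ((aux_rpow_affine_hasDerivAt c A (1 - θ) y hVy).div_const (1 - θ)).const_mul (A + 1)
    have h3 := ((aux_rpow_affine_hasDerivAt c A (-θ) y hVy).div_const θ).const_mul A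
    have h4 := ((h1.sub h2).sub h3).div_const (γ * c ^ 2)
    refine h4.congr_deriv ?_
    have e4 : (c * y + A) ^ (-θ) = (c * y + A) * (c * y + A) ^ (-θ - 1) := by
      nth_rewrite 1 [show (-θ) = 1 + (-θ - 1) by ring]
      rw [Real.rpow_add hVy, Real.rpow_one]
    have e3 : (c * y + A) ^ ((1:ℝ) - θ) = (c * y + A) * ((c * y + A) * (c * y + A) ^ (-θ - 1)) := by
      rw [show (1:ℝ) - θ = 1 + (1 + (-θ - 1)) by ring, Real.rpow_add hVy, Real.rpow_add hVy,
        Real.rpow_one]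
    rw [show (2:ℝ) - θ - 1 = 1 - θ by ring, show (1:ℝ) - θ - 1 = -θ by ring, e3, e4]
    field_simp
    ring
  have hcont : ContinuousWithinAt H (Ici 0) 0 := by
    have hV0 : 0 < c * 0 + A := hV 0 le_rfl
    have h1 := (aux_rpow_affine_hasDerivAt c A (2 - θ) 0 hV0).div_const (2 - θ)
    have h2 := ((aux_rpow_affine_hasDerivAt c A (1 - θ) 0 hV0).div_const (1 - θ)).const_mul (A + 1)
    have h3 := ((aux_rpow_affine_hasDerivAt c A (-θ) 0 hV0).div_const θ).const_mul A
    exact ((((h1.sub h2).sub h3).div_const (γ * c ^ 2)).continuousAt).continuousWithinAt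
  have hnonneg : ∀ y ∈ Ioi (0:ℝ), 0 ≤ y * (a * y + b) * (c * y + A) ^ (-θ - 1) := by
    intro y hy
    have hy' : (0:ℝ) < y := hy
    have : 0 ≤ a * y + b := by nlinarith
    exact mul_nonneg (mul_nonneg hy'.le this) (Real.rpow_nonneg (hV y hy'.le).le _)
  have hlim : Filter.Tendsto H Filter.atTop (nhds 0) := by
    have t1 := (aux_tendsto_rpow_affine c A (2 - θ) hc (by linarith)).div_const (2 - θ)
    have t2 := ((aux_tendsto_rpow_affine c A (1 - θ) hc (by linarith)).div_const (1 - θ)).const_mul (A + 1)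
    have t3 := ((aux_tendsto_rpow_affine c A (-θ) hc (by linarith)).div_const θ).const_mul A
    have := ((t1.sub t2).sub t3).div_const (γ * c ^ 2)
    simpa [hHdef] using this
  refine ⟨integrableOn_Ioi_deriv_of_nonneg hcont hderiv hnonneg hlim, ?_⟩
  rw [integral_Ioi_of_hasDerivAt_of_nonneg hcont hderiv hnonneg hlim]
  have hA1 : A ^ ((1:ℝ) - θ) = A * A ^ (-θ) := by
    rw [show (1:ℝ) - θ = 1 + (-θ) by ring, Real.rpow_add hA, Real.rpow_one]
  simp only [hHdef, mul_zero, zero_add]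
  rw [hA1]
  field_simp
  ring

lemma aux_exp_integral (k x0 r τ : ℝ) (hk : k ≠ 0) :
    ∫ ω in r..τ, Real.exp (k * (ω - x0))
      = (Real.exp (k * (τ - x0)) - Real.exp (k * (r - x0))) / k := by
  have h : ∀ ω ∈ uIcc r τ,
      HasDerivAt (fun ω => Real.exp (k * (ω - x0)) / k) (Real.exp (k * (ω - x0))) ω := by
    intro ω _
    have h1 : HasDerivAt (fun ω : ℝ => k * (ω - x0)) k ω := by
      simpa using ((hasDerivAt_id ω).sub_const x0).const_mul k
    have h2 := (h1.exp).div_const k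
    refine h2.congr_deriv ?_
    field_simp
  rw [intervalIntegral.integral_eq_sub_of_hasDerivAt h
    ((Real.continuous_exp.comp (by continuity)).intervalIntegrable r τ)]
  ring

lemma aux_comb (γ θ a b K : ℝ) (hγ : 0 < γ) (hθ : 2 < θ) (ha : 0 < a) (hb : 0 ≤ b) :
    ∫ y in Ioi (0:ℝ), (K * (y * (γ * a * y + (1 + γ * b)) ^ (-θ))
        - K * θ * γ * (y * (a * y + b) * (γ * a * y + (1 + γ * b)) ^ (-θ - 1)))
      = K * ((1 + γ * b) ^ (2 - θ) / (2 - θ) - (1 + γ * b) ^ (1 - θ) / (1 - θ)) / (γ * a) ^ 2 := by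
  obtain ⟨hi1, he1⟩ := aux_I1 γ θ a b hγ hθ ha hb
  obtain ⟨hi2, he2⟩ := aux_I2 γ θ a b hγ hθ ha hb
  rw [MeasureTheory.integral_sub (hi1.const_mul K) (hi2.const_mul (K * θ * γ)),
    MeasureTheory.integral_const_mul, MeasureTheory.integral_const_mul, he1, he2]
  have hA : (0:ℝ) < 1 + γ * b := by have : 0 ≤ γ * b := mul_nonneg hγ.le hb; linarith
  have hA2 : (1 + γ * b) ^ ((2:ℝ) - θ) = (1 + γ * b) * (1 + γ * b) ^ ((1:ℝ) - θ) := by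
    rw [show (2:ℝ) - θ = 1 + (1 - θ) by ring, Real.rpow_add hA, Real.rpow_one]
  have hd1 : (2:ℝ) - θ ≠ 0 := by linarith
  have hd2 : (1:ℝ) - θ ≠ 0 := by linarith
  have hd3 : θ ≠ 0 := by linarith
  rw [hA2]
  field_simp
  ring

end SelfSimilarAux

set_option maxHeartbeats 1000000 in
/-- bounds on the self-similar characteristic quantities
`M'(τ,r) = exp(∫_r^τ (γ + J))`, `M(τ,r) = ∫_r^τ M'(ρ,r) dρ`, and the moment
computation for `T̃(τ,r)Ψ(y) = e^{(τ-r)/2} M'(τ,r) Ψ(M'(τ,r)y + M(τ,r))`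
applied to `∂_y(y F_s(y))`. -/
theorem selfsimilar_characteristic_bounds_and_moment
    (β γ : ℝ) (hβ : 0 < β) (hγ : γ ∈ Set.Ioo (0 : ℝ) (1 / 2))
    (θ Ns cs : ℝ)
    (hθ : θ = 1 + 1 / (2 * γ))
    (hNs : Ns = Real.sqrt (β / (1 - γ)))
    (hcs : cs = (1 - 2 * γ) / 4 * Ns)
    (Fs : ℝ → ℝ)
    (hFs : ∀ y : ℝ, Fs y = cs * (1 + γ * y) ^ (-θ))
    (τ0 cJ η : ℝ) (hτ0 : 0 ≤ τ0) (hcJ : 0 < cJ) (hη : 0 < η)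
    (J : ℝ → ℝ) (hJc : ContinuousOn J (Set.Ici τ0))
    (hJ : ∀ τ, τ0 ≤ τ → |J τ| ≤ cJ * Real.exp (-η * (τ - τ0)))
    (M' M : ℝ → ℝ → ℝ)
    (hM' : ∀ τ r : ℝ, M' τ r = Real.exp (∫ ω in r..τ, (γ + J ω)))
    (hM : ∀ τ r : ℝ, M τ r = ∫ ρ in r..τ, M' ρ r)
    (cm : ℝ) (hcm : cm = Real.exp (cJ / η)) :
    (∀ τ r : ℝ, τ0 ≤ r → r ≤ τ →
      cm⁻¹ * Real.exp (γ * (τ - r)) ≤ M' τ r ∧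
      M' τ r ≤ cm * Real.exp (γ * (τ - r))) ∧
    (∀ τ r : ℝ, τ0 ≤ r → r ≤ τ →
      cm⁻¹ * γ⁻¹ * (Real.exp (γ * (τ - r)) - 1) ≤ M τ r ∧
      M τ r ≤ cm * γ⁻¹ * (Real.exp (γ * (τ - r)) - 1)) ∧
    ∃ c > (0 : ℝ),
      ∀ τ r : ℝ, τ0 ≤ r → r ≤ τ →
        ∃ Δ1 : ℝ, |Δ1| ≤ c * cJ ∧
          (2 * β / Ns ^ 3) *
              ∫ y in Set.Ioi (0 : ℝ),
                y * (Real.exp ((τ - r) / 2) * M' τ r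
                      * deriv (fun z => z * Fs z) (M' τ r * y + M τ r))
            = -((1 - γ) / γ)
                * (1 - (1 - 2 * γ) * Real.exp (-γ * (τ - r)) + Δ1) := by
  obtain ⟨hγ0, hγ2⟩ := hγ
  have hγ2 : γ < 1/2 := by linarith
  have key1 : ∀ τ r : ℝ, τ0 ≤ r → r ≤ τ →
      cm⁻¹ * Real.exp (γ * (τ - r)) ≤ M' τ r ∧ M' τ r ≤ cm * Real.exp (γ * (τ - r)) := by
    intro τ r hr hrτ
    have hIcc : Set.Icc r τ ⊆ Set.Ici τ0 := fun x hx => le_trans hr hx.1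
    have hJct : ContinuousOn J (Set.uIcc r τ) := by
      rw [Set.uIcc_of_le hrτ]; exact hJc.mono hIcc
    have hJint : IntervalIntegrable J volume r τ := hJct.intervalIntegrable
    have hsplit : (∫ ω in r..τ, (γ + J ω)) = γ * (τ - r) + ∫ ω in r..τ, J ω := by
      rw [intervalIntegral.integral_add intervalIntegrable_const hJint,
        intervalIntegral.integral_const, smul_eq_mul]
      ring
    have hbint : IntervalIntegrable (fun ω => cJ * Real.exp (-η * (ω - τ0))) volume r τ :=
      (Continuous.intervalIntegrable (by continuity) r τ)
    have hbound : |∫ ω in r..τ, J ω| ≤ cJ / η := by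
      have h1 : |∫ ω in r..τ, J ω| ≤ ∫ ω in r..τ, |J ω| :=
        intervalIntegral.abs_integral_le_integral_abs hrτ
      have h2 : (∫ ω in r..τ, |J ω|) ≤ ∫ ω in r..τ, cJ * Real.exp (-η * (ω - τ0)) := by
        apply intervalIntegral.integral_mono_on hrτ hJint.abs hbint
        intro ω hω
        exact hJ ω (le_trans hr hω.1)
      have h3 : (∫ ω in r..τ, cJ * Real.exp (-η * (ω - τ0)))
          = cJ * ((Real.exp (-η * (τ - τ0)) - Real.exp (-η * (r - τ0))) / (-η)) := by
        rw [intervalIntegral.integral_const_mul, aux_exp_integral (-η) τ0 r τ (by linarith)]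
      have h4 : Real.exp (-η * (r - τ0)) ≤ 1 := by
        rw [← Real.exp_zero]
        apply Real.exp_le_exp.2
        nlinarith
      have h5 : 0 < Real.exp (-η * (τ - τ0)) := Real.exp_pos _
      have h6 : cJ * ((Real.exp (-η * (τ - τ0)) - Real.exp (-η * (r - τ0))) / (-η)) ≤ cJ / η := by
        have e : cJ * ((Real.exp (-η * (τ - τ0)) - Real.exp (-η * (r - τ0))) / (-η))
            = cJ * (Real.exp (-η * (r - τ0)) - Real.exp (-η * (τ - τ0))) / η := by
          field_simp [hη.ne']; ring
        rw [e, div_le_div_iff₀ hη hη]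
        have h7 : 0 < 1 - Real.exp (-η * (r - τ0)) + Real.exp (-η * (τ - τ0)) := by linarith
        nlinarith [mul_pos (mul_pos hcJ hη) h7]
      linarith
    have habs : |(∫ ω in r..τ, (γ + J ω)) - γ * (τ - r)| ≤ cJ / η := by
      rw [hsplit]; simpa using hbound
    have hcm1 : cm⁻¹ = Real.exp (-(cJ / η)) := by rw [hcm, ← Real.exp_neg]
    constructor
    · rw [hM', hcm1, ← Real.exp_add]
      apply Real.exp_le_exp.2
      have := abs_le.1 habs
      linarith [this.1]
    · rw [hM', hcm, ← Real.exp_add]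
      apply Real.exp_le_exp.2
      have := abs_le.1 habs
      linarith [this.2]
  have key2 : ∀ τ r : ℝ, τ0 ≤ r → r ≤ τ →
      cm⁻¹ * γ⁻¹ * (Real.exp (γ * (τ - r)) - 1) ≤ M τ r ∧
      M τ r ≤ cm * γ⁻¹ * (Real.exp (γ * (τ - r)) - 1) := by
    intro τ r hr hrτ
    have hγne : γ ≠ 0 := ne_of_gt hγ0
    -- integrability of ρ ↦ M' ρ r on [r, τ]
    have hIcc : Set.Icc r τ ⊆ Set.Ici τ0 := fun x hx => le_trans hr hx.1
    have hfc : ContinuousOn (fun ω => γ + J ω) (Set.uIcc r τ) := by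
      rw [Set.uIcc_of_le hrτ]
      exact (continuousOn_const.add (hJc.mono hIcc))
    have hfint : IntegrableOn (fun ω => γ + J ω) (Set.uIcc r τ) volume :=
      hfc.integrableOn_uIcc
    have hprim : ContinuousOn (fun x => ∫ t in r..x, (γ + J t)) (Set.uIcc r τ) :=
      intervalIntegral.continuousOn_primitive_interval' hfint.intervalIntegrable (by
          rw [Set.uIcc_of_le hrτ]; exact Set.left_mem_Icc.2 hrτ)
    have hM'cont : ContinuousOn (fun ρ => M' ρ r) (Set.uIcc r τ) := by
      refine (Real.continuous_exp.comp_continuousOn hprim).congr ?_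
      intro x hx; simp only []; rw [hM']; rfl
    have hM'int : IntervalIntegrable (fun ρ => M' ρ r) volume r τ := hM'cont.intervalIntegrable
    have hexpint : IntervalIntegrable (fun ρ => Real.exp (γ * (ρ - r))) volume r τ :=
      Continuous.intervalIntegrable (by continuity) r τ
    have hintexp : ∫ ρ in r..τ, Real.exp (γ * (ρ - r)) = (Real.exp (γ * (τ - r)) - 1) / γ := by
      rw [aux_exp_integral γ r r τ hγne]; simp
    constructor
    · rw [hM]
      have hle : ∀ ρ ∈ Set.Icc r τ, cm⁻¹ * Real.exp (γ * (ρ - r)) ≤ M' ρ r :=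
        fun ρ hρ => (key1 ρ r hr hρ.1).1
      have hmono := intervalIntegral.integral_mono_on hrτ (hexpint.const_mul cm⁻¹) hM'int hle
      rw [intervalIntegral.integral_const_mul, hintexp] at hmono
      have e2 : cm⁻¹ * γ⁻¹ * (Real.exp (γ * (τ - r)) - 1)
          = cm⁻¹ * ((Real.exp (γ * (τ - r)) - 1) / γ) := by ring
      linarith
    · rw [hM]
      have hle : ∀ ρ ∈ Set.Icc r τ, M' ρ r ≤ cm * Real.exp (γ * (ρ - r)) :=
        fun ρ hρ => (key1 ρ r hr hρ.1).2
      have hmono := intervalIntegral.integral_mono_on hrτ hM'int (hexpint.const_mul cm) hle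
      rw [intervalIntegral.integral_const_mul, hintexp] at hmono
      have e2 : cm * γ⁻¹ * (Real.exp (γ * (τ - r)) - 1)
          = cm * ((Real.exp (γ * (τ - r)) - 1) / γ) := by ring
      linarith
  refine ⟨key1, key2, ?_⟩
  have hγne : γ ≠ 0 := ne_of_gt hγ0
  have hcmpos : (0:ℝ) < cm := by rw [hcm]; positivity
  have hcm1 : (1:ℝ) ≤ cm := by rw [hcm]; exact Real.one_le_exp (by positivity)
  have hθ2 : 2 < θ := by
    rw [hθ]
    have := (one_lt_div (by linarith : (0:ℝ) < 2*γ)).mpr (by linarith : 2*γ < 1)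
    linarith
  have h1γ : (0:ℝ) < 1 - γ := by linarith
  have h12γ : (0:ℝ) < 1 - 2*γ := by linarith
  have hNspos : 0 < Ns := by rw [hNs]; exact Real.sqrt_pos.2 (by positivity)
  have hNs2 : Ns ^ 2 = β / (1 - γ) := by rw [hNs]; exact Real.sq_sqrt (by positivity)
  have hβe : β = (1 - γ) * Ns ^ 2 := by rw [hNs2]; field_simp
  have hcspos : 0 < cs := by rw [hcs]; positivity
  refine ⟨(2 * cm ^ θ + 2) / cJ, by positivity, ?_⟩
  intro τ r hr hrτ
  -- basic positivity
  have hs0 : 0 ≤ τ - r := by linarith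
  have hE1 : (1:ℝ) ≤ Real.exp (γ * (τ - r)) := Real.one_le_exp (by positivity)
  obtain ⟨haL, haU⟩ := key1 τ r hr hrτ
  obtain ⟨hML, hMU⟩ := key2 τ r hr hrτ
  set a := M' τ r with hadef
  set b := M τ r with hbdef
  set E2 := Real.exp ((τ - r) / 2) with hE2def
  set u := cm⁻¹ * Real.exp (γ * (τ - r)) with hudef
  have hu : 0 < u := by positivity
  have hapos : 0 < a := lt_of_lt_of_le hu haL
  have hbnn : 0 ≤ b := by
    refine le_trans ?_ hML
    have h1 : (0:ℝ) ≤ cm⁻¹ * γ⁻¹ := by positivity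
    exact mul_nonneg h1 (by linarith)
  set A := 1 + γ * b with hAdef
  have hApos : 0 < A := by
    have := mul_nonneg hγ0.le hbnn
    rw [hAdef]; linarith
  have hAu : u ≤ A := by
    have hcminv : cm⁻¹ ≤ 1 := inv_le_one_of_one_le₀ hcm1
    have h1 : γ * (cm⁻¹ * γ⁻¹ * (Real.exp (γ * (τ - r)) - 1))
        = cm⁻¹ * (Real.exp (γ * (τ - r)) - 1) := by field_simp
    have h2 : cm⁻¹ * (Real.exp (γ * (τ - r)) - 1) ≤ γ * b := by
      rw [← h1]; exact mul_le_mul_of_nonneg_left hML hγ0.le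
    rw [hudef, hAdef]
    have h3 : cm⁻¹ * (Real.exp (γ * (τ - r)) - 1) = cm⁻¹ * Real.exp (γ * (τ - r)) - cm⁻¹ := by ring
    linarith
  set X := A ^ (2 - θ) with hXdef
  set Y := A ^ (1 - θ) with hYdef
  set Δ1 := E2 * a⁻¹ * (X - (1 - 2*γ) * Y) - 1 + (1 - 2*γ) * Real.exp (-γ * (τ - r)) with hΔdef
  clear_value Δ1
  clear_value X Y
  refine ⟨Δ1, ?_, ?_⟩
  · -- the bound
    have hub : ∀ p : ℝ, p ≤ 0 →
        E2 * a⁻¹ * A ^ p ≤ Real.exp ((τ - r)/2 + γ * (τ - r) * (p - 1)) * cm ^ (1 - p) := by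
      intro p hp
      have h1 : A ^ p ≤ u ^ p := Real.rpow_le_rpow_of_nonpos hu hAu hp
      have h2 : a⁻¹ ≤ u⁻¹ := inv_anti₀ hu haL
      have h3 : E2 * a⁻¹ * A ^ p ≤ E2 * u⁻¹ * u ^ p := by
        have hE2p : 0 < E2 := Real.exp_pos _
        apply mul_le_mul (mul_le_mul_of_nonneg_left h2 hE2p.le) h1
          (Real.rpow_nonneg hApos.le p) (by positivity)
      have h4 : u ⁻¹ * u ^ p = u ^ (p - 1) := by
        rw [show p - 1 = p + (-1) by ring, Real.rpow_add hu, Real.rpow_neg_one]; ring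
      have h5 : u ^ (p - 1) = cm ^ (1 - p) * Real.exp (γ * (τ - r) * (p - 1)) := by
        rw [hudef, Real.mul_rpow (by positivity) (Real.exp_pos _).le,
          Real.inv_rpow hcmpos.le, ← Real.rpow_neg hcmpos.le, ← Real.exp_mul,
          show -(p-1) = 1 - p by ring]
      calc E2 * a⁻¹ * A ^ p ≤ E2 * u⁻¹ * u ^ p := h3
        _ = E2 * (u⁻¹ * u ^ p) := by ring
        _ = E2 * (cm ^ (1-p) * Real.exp (γ * (τ - r) * (p - 1))) := by rw [h4, h5]
        _ = Real.exp ((τ - r)/2 + γ * (τ - r) * (p - 1)) * cm ^ (1 - p) := by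
            rw [Real.exp_add]; ring
    have hT1 : E2 * a⁻¹ * X ≤ cm ^ (θ - 1) := by
      have h := hub (2 - θ) (by linarith)
      have he0 : (τ - r)/2 + γ * (τ - r) * ((2 - θ) - 1) = 0 := by rw [hθ]; field_simp; ring
      rw [he0, Real.exp_zero, one_mul, show (1 - (2 - θ)) = θ - 1 by ring] at h
      rw [hXdef]; exact h
    have hT2 : E2 * a⁻¹ * Y ≤ cm ^ θ := by
      have h := hub (1 - θ) (by linarith)
      have he0 : (τ - r)/2 + γ * (τ - r) * ((1 - θ) - 1) = -γ * (τ - r) := by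
        rw [hθ]; field_simp; ring
      rw [he0, show (1 - (1 - θ)) = θ by ring] at h
      rw [hYdef]
      calc E2 * a⁻¹ * A ^ (1 - θ) ≤ Real.exp (-γ * (τ - r)) * cm ^ θ := h
        _ ≤ 1 * cm ^ θ :=
            mul_le_mul_of_nonneg_right (Real.exp_le_one_iff.2
              (by have := mul_nonneg hγ0.le hs0; linarith))
              (Real.rpow_nonneg hcmpos.le θ)
        _ = cm ^ θ := one_mul _
    have hT1nn : 0 ≤ E2 * a⁻¹ * X := by
      rw [hXdef]
      exact mul_nonneg (mul_nonneg (Real.exp_pos _).le (inv_nonneg.2 hapos.le))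
        (Real.rpow_nonneg hApos.le _)
    have hT2nn : 0 ≤ E2 * a⁻¹ * Y := by
      rw [hYdef]
      exact mul_nonneg (mul_nonneg (Real.exp_pos _).le (inv_nonneg.2 hapos.le))
        (Real.rpow_nonneg hApos.le _)
    have hTm : cm ^ (θ - 1) ≤ cm ^ θ := Real.rpow_le_rpow_of_exponent_le hcm1 (by linarith)
    have hccJ : (2 * cm ^ θ + 2) / cJ * cJ = 2 * cm ^ θ + 2 := div_mul_cancel₀ _ hcJ.ne'
    rw [hccJ, abs_le]
    have hexp1 : Real.exp (-γ * (τ - r)) ≤ 1 := Real.exp_le_one_iff.2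
      (by have := mul_nonneg hγ0.le hs0; linarith)
    have hexp0 : 0 < Real.exp (-γ * (τ - r)) := Real.exp_pos _
    have hcmθ : 0 < cm ^ θ := Real.rpow_pos_of_pos hcmpos θ
    have p1 : (1 - 2*γ) * (E2 * a⁻¹ * Y) ≤ E2 * a⁻¹ * Y := by
      have := mul_le_mul_of_nonneg_right (by linarith : 1 - 2*γ ≤ 1) hT2nn
      linarith
    have p2 : 0 ≤ (1 - 2*γ) * (E2 * a⁻¹ * Y) := mul_nonneg h12γ.le hT2nn
    have p3 : (1 - 2*γ) * Real.exp (-γ * (τ - r)) ≤ 1 := by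
      have := mul_le_mul (by linarith : 1 - 2*γ ≤ 1) hexp1 hexp0.le zero_le_one
      linarith
    have p4 : 0 ≤ (1 - 2*γ) * Real.exp (-γ * (τ - r)) := mul_nonneg h12γ.le hexp0.le
    have hΔeq : Δ1 = E2 * a⁻¹ * X - (1 - 2*γ) * (E2 * a⁻¹ * Y) - 1
        + (1 - 2*γ) * Real.exp (-γ * (τ - r)) := by rw [hΔdef]; ring
    constructor <;> (rw [hΔeq]; linarith)
  · -- the identity
    have hint : ∫ y in Set.Ioi (0:ℝ),
          y * (E2 * a * deriv (fun z => z * Fs z) (a * y + b))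
        = ∫ y in Set.Ioi (0:ℝ), ((E2 * a * cs) * (y * (γ * a * y + (1 + γ * b)) ^ (-θ))
            - (E2 * a * cs) * θ * γ * (y * (a * y + b) * (γ * a * y + (1 + γ * b)) ^ (-θ - 1))) := by
      apply MeasureTheory.setIntegral_congr_fun measurableSet_Ioi
      intro y hy
      have hy0 : (0:ℝ) < y := hy
      have hz : 0 < a * y + b := by positivity
      have hV : 0 < 1 + γ * (a * y + b) := by positivity
      have hfun : (fun z : ℝ => z * Fs z) = (fun z => z * (cs * (1 + γ * z) ^ (-θ))) :=
        funext fun z => by rw [hFs]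
      have hdi : HasDerivAt (fun z : ℝ => 1 + γ * z) γ (a * y + b) := by
        simpa using ((hasDerivAt_id (a*y+b)).const_mul γ).const_add 1
      have hdr := hdi.rpow_const (p := -θ) (Or.inl hV.ne')
      have hdc := hdr.const_mul cs
      have hdm := (hasDerivAt_id (a*y+b)).mul hdc
      have hder : deriv (fun z : ℝ => z * Fs z) (a * y + b)
          = 1 * (cs * (1 + γ * (a*y+b)) ^ (-θ))
            + (a*y+b) * (cs * (γ * (-θ) * (1 + γ * (a*y+b)) ^ (-θ - 1))) := by
        rw [hfun]
        exact hdm.deriv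
      simp only []
      rw [hder]
      have hbase : 1 + γ * (a * y + b) = γ * a * y + (1 + γ * b) := by ring
      rw [hbase]
      ring
    rw [hint, aux_comb γ θ a b (E2 * a * cs) hγ0 hθ2 hapos hbnn]
    -- now pure algebra
    have h2θv : ∀ Z : ℝ, Z / (2 - θ) = -(2*γ) * Z / (1 - 2*γ) := by
      intro Z
      rw [div_eq_div_iff (by intro h; linarith [sub_eq_zero.1 h] : (2:ℝ) - θ ≠ 0)
        (by intro h; linarith [sub_eq_zero.1 h] : (1:ℝ) - 2*γ ≠ 0), hθ]
      field_simp
      ring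
    have h1θv : ∀ Z : ℝ, Z / (1 - θ) = -(2*γ) * Z := by
      intro Z
      rw [div_eq_iff (by intro h; linarith [sub_eq_zero.1 h] : (1:ℝ) - θ ≠ 0), hθ]
      field_simp
      ring
    rw [h2θv, h1θv, hΔdef, hXdef, hYdef, hcs, hβe]
    have haine : a ≠ 0 := hapos.ne'
    field_simp
    ring
end

section
/- Let γ ∈ (0, 1/2), τ_0 ≥ 1, η ∈ (0, 1−γ), and c_2, c_H > 0. Let Δ_1, Δ_2, H ∈ C([τ_0,∞)) satisfy |Δ_1(τ)| ≤ γ³(1−γ−η)/16, |Δ_2(τ)| ≤ c_2·e^{−η(τ−τ_0)}, and |H(τ)| ≤ c_H·e^{−η(τ−τ_0)} for all τ ≥ τ_0, and let N ∈ C([τ_0,∞)) satisfy the integral equation N(τ) = −((1−γ)/γ)·∫_{τ_0}^τ (1 + Δ_1(r) − (1−2γ)·e^{−γ(τ−r)})·(N(r) + H(r)) dr + Δ_2(τ) for all τ ≥ τ_0. Then there exists a constant c(γ,η) > 0 depending only on γ and η such that |N(τ)| ≤ c(γ,η)·(c_2 + c_H)·e^{−η(τ−τ_0)} for all τ ≥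 τ_0. -/
open Real MeasureTheory Set intervalIntegral

lemma my_ftc1 (f : ℝ → ℝ) (hf : Continuous f) (a b : ℝ) :
    HasDerivAt (fun t => ∫ r in a..t, f r) (f b) b :=
  intervalIntegral.integral_hasDerivAt_right (hf.intervalIntegrable _ _)
    (hf.stronglyMeasurable.stronglyMeasurableAtFilter) hf.continuousAt

lemma my_exp_deriv (l a : ℝ) (τ : ℝ) :
    HasDerivAt (fun t : ℝ => Real.exp (l * (t - a))) (l * Real.exp (l * (τ - a))) τ := by
  have h : HasDerivAt (fun t : ℝ => l * (t - a)) l τ := by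
    simpa using ((hasDerivAt_id τ).sub_const a).const_mul l
  simpa [mul_comm] using h.exp

lemma my_duhamel (z f : ℝ → ℝ) (l a b : ℝ) (hab : a ≤ b) (hz0 : z a = 0)
    (hf : Continuous f)
    (hderiv : ∀ τ ∈ Set.Icc a b, HasDerivAt z (-(l * z τ) + f τ) τ) :
    z b = Real.exp (-l * (b - a)) * ∫ r in a..b, Real.exp (l * (r - a)) * f r := by
  have hΦ : ∀ τ ∈ uIcc a b, HasDerivAt (fun t => Real.exp (l * (t - a)) * z t)
      (Real.exp (l * (τ - a)) * f τ) τ := by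
    intro τ hτ
    rw [uIcc_of_le hab] at hτ
    have h := (my_exp_deriv l a τ).mul (hderiv τ hτ)
    refine h.congr_deriv ?_
    ring
  have hint : IntervalIntegrable (fun r => Real.exp (l * (r - a)) * f r) volume a b :=
    ((Real.continuous_exp.comp (by continuity)).mul hf).intervalIntegrable a b
  have h2 := intervalIntegral.integral_eq_sub_of_hasDerivAt hΦ hint
  have h3 : Real.exp (l * (b - a)) * z b = ∫ r in a..b, Real.exp (l * (r - a)) * f r := by
    simpa [hz0] using h2.symm
  rw [← h3, neg_mul, Real.exp_neg, ← mul_assoc, inv_mul_cancel₀ (Real.exp_ne_zero _), one_mul]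

lemma my_int_exp (c a b : ℝ) (hc : c ≠ 0) :
    ∫ r in a..b, Real.exp (c * (r - a)) = (Real.exp (c * (b - a)) - 1) / c := by
  have h : ∀ x ∈ uIcc a b, HasDerivAt (fun r => Real.exp (c * (r - a)) / c)
      (Real.exp (c * (x - a))) x := by
    intro x _
    simpa [mul_div_assoc, mul_comm, mul_div_cancel_left₀ _ hc] using (my_exp_deriv c a x).div_const c
  rw [intervalIntegral.integral_eq_sub_of_hasDerivAt h
    (((Real.continuous_exp.comp (by continuity))).intervalIntegrable a b)]
  simp [sub_div]

lemma my_bound (l η A a b : ℝ) (hab : a ≤ b) (hl : η < l) (hA : 0 ≤ A)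
    (F : ℝ → ℝ) (hF : Continuous F) (hFb : ∀ r ∈ Set.Icc a b, |F r| ≤ A * Real.exp (-η * (r - a))) :
    |Real.exp (-l * (b - a)) * ∫ r in a..b, Real.exp (l * (r - a)) * F r|
      ≤ A / (l - η) * Real.exp (-η * (b - a)) := by
  have hlη : 0 < l - η := by linarith
  have h1 : |∫ r in a..b, Real.exp (l * (r - a)) * F r|
      ≤ ∫ r in a..b, A * Real.exp ((l - η) * (r - a)) := by
    refine (intervalIntegral.abs_integral_le_integral_abs hab).trans ?_
    refine intervalIntegral.integral_mono_on hab
      (((Real.continuous_exp.comp (by continuity)).mul hF).abs.intervalIntegrable a b)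
      ((continuous_const.mul (Real.continuous_exp.comp (by continuity))).intervalIntegrable a b) ?_
    intro r hr
    rw [abs_mul, abs_of_pos (Real.exp_pos _)]
    calc Real.exp (l * (r - a)) * |F r| ≤ Real.exp (l * (r - a)) * (A * Real.exp (-η * (r - a))) := by
          exact mul_le_mul_of_nonneg_left (hFb r hr) (Real.exp_pos _).le
      _ = A * Real.exp ((l - η) * (r - a)) := by
          rw [show (l - η) * (r - a) = l * (r - a) + -η * (r - a) by ring, Real.exp_add]
          ring
  have h2 : ∫ r in a..b, A * Real.exp ((l - η) * (r - a))
      = A * ((Real.exp ((l - η) * (b - a)) - 1) / (l - η)) := by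
    rw [intervalIntegral.integral_const_mul, my_int_exp _ _ _ hlη.ne']
  have h3 : A * ((Real.exp ((l - η) * (b - a)) - 1) / (l - η))
      ≤ A / (l - η) * Real.exp ((l - η) * (b - a)) := by
    rw [div_mul_eq_mul_div, mul_div_assoc]
    gcongr
    linarith [Real.exp_pos ((l - η) * (b - a))]
  calc |Real.exp (-l * (b - a)) * ∫ r in a..b, Real.exp (l * (r - a)) * F r|
      = Real.exp (-l * (b - a)) * |∫ r in a..b, Real.exp (l * (r - a)) * F r| := by
        rw [abs_mul, abs_of_pos (Real.exp_pos _)]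
    _ ≤ Real.exp (-l * (b - a)) * (A / (l - η) * Real.exp ((l - η) * (b - a))) := by
        refine mul_le_mul_of_nonneg_left (h1.trans (h2 ▸ h3)) (Real.exp_pos _).le
    _ = A / (l - η) * Real.exp (-η * (b - a)) := by
        rw [← mul_assoc, mul_comm (Real.exp _), mul_assoc, ← Real.exp_add]; ring_nf

set_option maxHeartbeats 1600000 in
/-- stability lemma for the perturbed integral equation governing
the first-moment error: if `|Δ₁| ≤ γ³(1-γ-η)/16`, `|Δ₂| ≤ c₂ e^{-η(τ-τ₀)}`,
`|H| ≤ c_H e^{-η(τ-τ₀)}` and `N` solves the perturbed integral equation, then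
`|N(τ)| ≤ c(γ,η)(c₂ + c_H) e^{-η(τ-τ₀)}` for all `τ ≥ τ₀`. -/
theorem moment_integral_equation_stability
    (γ η : ℝ) (hγ : γ ∈ Set.Ioo (0 : ℝ) (1 / 2)) (hη : η ∈ Set.Ioo (0 : ℝ) (1 - γ)) :
    ∃ c > (0 : ℝ),
      ∀ τ0 : ℝ, 1 ≤ τ0 →
      ∀ c2 cH : ℝ, 0 < c2 → 0 < cH →
      ∀ Δ1 Δ2 H N : ℝ → ℝ,
        ContinuousOn Δ1 (Set.Ici τ0) →
        ContinuousOn Δ2 (Set.Ici τ0) →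
        ContinuousOn H (Set.Ici τ0) →
        ContinuousOn N (Set.Ici τ0) →
        (∀ τ, τ0 ≤ τ → |Δ1 τ| ≤ γ ^ 3 * (1 - γ - η) / 16) →
        (∀ τ, τ0 ≤ τ → |Δ2 τ| ≤ c2 * Real.exp (-η * (τ - τ0))) →
        (∀ τ, τ0 ≤ τ → |H τ| ≤ cH * Real.exp (-η * (τ - τ0))) →
        (∀ τ, τ0 ≤ τ →
          N τ = -((1 - γ) / γ) *
              (∫ r in τ0..τ,
                (1 + Δ1 r - (1 - 2 * γ) * Real.exp (-γ * (τ - r))) * (N r + H r))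
            + Δ2 τ) →
        ∀ τ, τ0 ≤ τ → |N τ| ≤ c * (c2 + cH) * Real.exp (-η * (τ - τ0)) := by
  obtain ⟨hγ0, hγh⟩ := hγ
  obtain ⟨hη0, hη1⟩ := hη
  have hγη : 0 < 1 - γ - η := by linarith
  have hγne : γ ≠ 0 := ne_of_gt hγ0
  refine ⟨8 / (γ * (1 - γ - η)) + 2, by positivity, ?_⟩
  intro τ0 hτ0 c2 cH hc2 hcH Δ1 Δ2 H N hΔ1c hΔ2c hHc hNc hΔ1 hΔ2 hH heq τf hτf
  -- clamped (continuous on all of ℝ) versions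
  have hq : Continuous (fun r : ℝ => max r τ0) := continuous_id.max continuous_const
  have hqm : ∀ r : ℝ, max r τ0 ∈ Set.Ici τ0 := fun r => le_max_right r τ0
  set D1 : ℝ → ℝ := fun r => Δ1 (max r τ0) with hD1def
  set D2 : ℝ → ℝ := fun r => Δ2 (max r τ0) with hD2def
  set Hc : ℝ → ℝ := fun r => H (max r τ0) with hHcdef
  set Nc : ℝ → ℝ := fun r => N (max r τ0) with hNcdef
  have hD1cont : Continuous D1 := hΔ1c.comp_continuous hq hqm
  have hD2cont : Continuous D2 := hΔ2c.comp_continuous hq hqm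
  have hHccont : Continuous Hc := hHc.comp_continuous hq hqm
  have hNccont : Continuous Nc := hNc.comp_continuous hq hqm
  have hD1e : ∀ r, τ0 ≤ r → D1 r = Δ1 r := fun r hr => by simp [hD1def, max_eq_left hr]
  have hD2e : ∀ r, τ0 ≤ r → D2 r = Δ2 r := fun r hr => by simp [hD2def, max_eq_left hr]
  have hHce : ∀ r, τ0 ≤ r → Hc r = H r := fun r hr => by simp [hHcdef, max_eq_left hr]
  have hNce : ∀ r, τ0 ≤ r → Nc r = N r := fun r hr => by simp [hNcdef, max_eq_left hr]
  set g : ℝ → ℝ := fun r => Nc r + Hc r with hgdef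
  have hgcont : Continuous g := hNccont.add hHccont
  have hge : ∀ r, τ0 ≤ r → g r = N r + H r := fun r hr => by
    simp [hgdef, hNce r hr, hHce r hr]
  set k : ℝ := (1 - γ) / γ with hkdef
  set u : ℝ → ℝ := fun τ => ∫ r in τ0..τ, (1 + D1 r) * g r with hudef
  set V : ℝ → ℝ := fun τ => ∫ r in τ0..τ, Real.exp (γ * r) * g r with hVdef
  set w : ℝ → ℝ := fun τ => Real.exp (-(γ * τ)) * V τ with hwdef
  -- Step 1: the equation in terms of u and w
  have heq' : ∀ τ, τ0 ≤ τ → N τ = -(k * (u τ - (1 - 2 * γ) * w τ)) + Δ2 τ := by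
    intro τ hτ
    have hsplit : (∫ r in τ0..τ, (1 + Δ1 r - (1 - 2 * γ) * Real.exp (-γ * (τ - r))) * (N r + H r))
        = u τ - (1 - 2 * γ) * w τ := by
      have hcg : Set.EqOn (fun r => (1 + Δ1 r - (1 - 2 * γ) * Real.exp (-γ * (τ - r))) * (N r + H r))
          (fun r => (1 + D1 r) * g r
            - (1 - 2 * γ) * (Real.exp (-(γ * τ)) * (Real.exp (γ * r) * g r))) (Set.uIcc τ0 τ) := by
        intro r hr
        rw [Set.uIcc_of_le hτ] at hr
        simp only
        rw [hD1e r hr.1, hge r hr.1,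
          show -γ * (τ - r) = -(γ * τ) + γ * r by ring, Real.exp_add]
        ring
      have hint1 : IntervalIntegrable (fun r => (1 + D1 r) * g r) volume τ0 τ :=
        Continuous.intervalIntegrable (by fun_prop) _ _
      have hint2 : IntervalIntegrable
          (fun r => (1 - 2 * γ) * (Real.exp (-(γ * τ)) * (Real.exp (γ * r) * g r)))
          volume τ0 τ :=
        Continuous.intervalIntegrable (by fun_prop) _ _
      rw [intervalIntegral.integral_congr hcg, intervalIntegral.integral_sub hint1 hint2,
        intervalIntegral.integral_const_mul, intervalIntegral.integral_const_mul]
    rw [heq τ hτ, hsplit]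
    ring
  -- Step 2: derivatives
  have hu' : ∀ τ, HasDerivAt u ((1 + D1 τ) * g τ) τ := fun τ =>
    my_ftc1 _ ((continuous_const.add hD1cont).mul hgcont) τ0 τ
  have hV' : ∀ τ, HasDerivAt V (Real.exp (γ * τ) * g τ) τ := fun τ =>
    my_ftc1 _ ((Real.continuous_exp.comp (continuous_const.mul continuous_id)).mul hgcont) τ0 τ
  have hw' : ∀ τ, HasDerivAt w (-(γ * w τ) + g τ) τ := by
    intro τ
    have he : HasDerivAt (fun t : ℝ => Real.exp (-(γ * t))) (-γ * Real.exp (-(γ * τ))) τ := by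
      simpa [neg_mul, sub_zero] using my_exp_deriv (-γ) 0 τ
    have h := he.mul (hV' τ)
    refine h.congr_deriv ?_
    rw [show Real.exp (-(γ * τ)) * (Real.exp (γ * τ) * g τ) = g τ from by
      rw [← mul_assoc, ← Real.exp_add]; simp]
    simp only [hwdef]
    ring
  -- Step 3: diagonal coordinates
  set z1 : ℝ → ℝ := fun τ => (1 - γ) * u τ - (1 - 2 * γ) * w τ with hz1def
  set f1 : ℝ → ℝ := fun r => γ * (D2 r + Hc r) + (1 - γ) * (D1 r * g r) with hf1def
  set z2 : ℝ → ℝ := fun τ => u τ - (1 - γ) * w τ with hz2def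
  set f2 : ℝ → ℝ := fun r => γ * (D2 r + Hc r) + D1 r * g r with hf2def
  have hf1cont : Continuous f1 :=
    (continuous_const.mul (hD2cont.add hHccont)).add
      (continuous_const.mul (hD1cont.mul hgcont))
  have hf2cont : Continuous f2 :=
    (continuous_const.mul (hD2cont.add hHccont)).add (hD1cont.mul hgcont)
  have hz1' : ∀ τ, τ0 ≤ τ → HasDerivAt z1 (-(1 * z1 τ) + f1 τ) τ := by
    intro τ hτ
    have h := ((hu' τ).const_mul (1 - γ)).sub ((hw' τ).const_mul (1 - 2 * γ))
    refine h.congr_deriv ?_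
    simp only [hz1def, hf1def]
    rw [hge τ hτ, hD2e τ hτ, hHce τ hτ, heq' τ hτ, hkdef]
    field_simp
    ring
  have hz2' : ∀ τ, τ0 ≤ τ → HasDerivAt z2 (-((1 - γ) * z2 τ) + f2 τ) τ := by
    intro τ hτ
    have h := (hu' τ).sub ((hw' τ).const_mul (1 - γ))
    refine h.congr_deriv ?_
    simp only [hz2def, hf2def]
    rw [hge τ hτ, hD2e τ hτ, hHce τ hτ, heq' τ hτ, hkdef]
    field_simp
    ring
  -- Step 4: Duhamel representations
  have hu0 : u τ0 = 0 := by simp [hudef]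
  have hV0 : V τ0 = 0 := by simp [hVdef]
  have hz10 : z1 τ0 = 0 := by simp [hz1def, hwdef, hu0, hV0]
  have hz20 : z2 τ0 = 0 := by simp [hz2def, hwdef, hu0, hV0]
  have hrep1 : ∀ τ, τ0 ≤ τ → z1 τ
      = Real.exp (-1 * (τ - τ0)) * ∫ r in τ0..τ, Real.exp (1 * (r - τ0)) * f1 r := by
    intro τ hτ
    exact my_duhamel z1 f1 1 τ0 τ hτ hz10 hf1cont (fun s hs => hz1' s hs.1)
  have hrep2 : ∀ τ, τ0 ≤ τ → z2 τ
      = Real.exp (-(1 - γ) * (τ - τ0)) * ∫ r in τ0..τ, Real.exp ((1 - γ) * (r - τ0)) * f2 r := by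
    intro τ hτ
    exact my_duhamel z2 f2 (1 - γ) τ0 τ hτ hz20 hf2cont (fun s hs => hz2' s hs.1)
  -- Step 5: recover N
  have hrec : ∀ τ, τ0 ≤ τ →
      N τ = -(k / γ * (z1 τ - (1 - 2 * γ) * z2 τ)) + Δ2 τ := by
    intro τ hτ
    rw [heq' τ hτ]
    simp only [hz1def, hz2def, hkdef]
    field_simp
    ring
  clear_value D1 D2 Hc Nc g k u V w z1 f1 z2 f2
  -- Step 6: the Gronwall-type argument on [τ0, τf]
  set ε : ℝ := γ ^ 3 * (1 - γ - η) / 16 with hεdef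
  have hε0 : 0 < ε := by positivity
  set m : ℝ → ℝ := fun r => |Nc r| * Real.exp (η * (r - τ0)) with hmdef
  have hmcont : Continuous m :=
    hNccont.abs.mul (Real.continuous_exp.comp
      (continuous_const.mul (continuous_id.sub continuous_const)))
  obtain ⟨x, hxmem, hxmax⟩ :=
    isCompact_Icc.exists_isMaxOn (Set.nonempty_Icc.2 hτf) hmcont.continuousOn
  set M : ℝ := m x with hMdef
  have hM0 : 0 ≤ M := mul_nonneg (abs_nonneg _) (Real.exp_pos _).le
  clear_value M
  have hNb : ∀ r ∈ Set.Icc τ0 τf, |N r| ≤ M * Real.exp (-η * (r - τ0)) := by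
    intro r hr
    have h1 : m r ≤ M := by rw [hMdef]; exact hxmax hr
    have h3 : m r * Real.exp (-η * (r - τ0)) = |N r| := by
      simp only [hmdef]
      rw [mul_assoc, ← Real.exp_add, show η * (r - τ0) + -η * (r - τ0) = 0 by ring,
        Real.exp_zero, mul_one, hNce r hr.1]
    rw [← h3]
    exact mul_le_mul_of_nonneg_right h1 (Real.exp_pos _).le
  set A : ℝ := γ * (c2 + cH) + ε * cH + ε * M with hAdef
  have hA0 : 0 ≤ A :=
    add_nonneg (add_nonneg (mul_nonneg hγ0.le (by linarith)) (mul_nonneg hε0.le hcH.le))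
      (mul_nonneg hε0.le hM0)
  clear_value A
  have hgb : ∀ r ∈ Set.Icc τ0 τf, |g r| ≤ (M + cH) * Real.exp (-η * (r - τ0)) := by
    intro r hr
    rw [hge r hr.1]
    calc |N r + H r| ≤ |N r| + |H r| := abs_add_le _ _
      _ ≤ M * Real.exp (-η * (r - τ0)) + cH * Real.exp (-η * (r - τ0)) :=
          add_le_add (hNb r hr) (hH r hr.1)
      _ = (M + cH) * Real.exp (-η * (r - τ0)) := by ring
  have hfb : ∀ r ∈ Set.Icc τ0 τf, |f1 r| ≤ A * Real.exp (-η * (r - τ0))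
      ∧ |f2 r| ≤ A * Real.exp (-η * (r - τ0)) := by
    intro r hr
    have hprod : |Δ1 r| * |g r| ≤ ε * ((M + cH) * Real.exp (-η * (r - τ0))) := by
      refine mul_le_mul ?_ (hgb r hr) (abs_nonneg _) hε0.le
      simpa [hεdef] using hΔ1 r hr.1
    have e1 : γ * (|Δ2 r| + |H r|) ≤ γ * ((c2 + cH) * Real.exp (-η * (r - τ0))) := by
      refine mul_le_mul_of_nonneg_left ?_ hγ0.le
      have h2 := hΔ2 r hr.1
      have h4 := hH r hr.1
      nlinarith [Real.exp_pos (-η * (r - τ0))]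
    have hgoal : γ * (|Δ2 r| + |H r|) + |Δ1 r| * |g r| ≤ A * Real.exp (-η * (r - τ0)) := by
      calc γ * (|Δ2 r| + |H r|) + |Δ1 r| * |g r|
          ≤ γ * ((c2 + cH) * Real.exp (-η * (r - τ0)))
            + ε * ((M + cH) * Real.exp (-η * (r - τ0))) := add_le_add e1 hprod
        _ = A * Real.exp (-η * (r - τ0)) := by rw [hAdef]; ring
    constructor
    · calc |f1 r| ≤ |γ * (D2 r + Hc r)| + |(1 - γ) * (D1 r * g r)| := by
            simp only [hf1def]; exact abs_add_le _ _
        _ = γ * |D2 r + Hc r| + (1 - γ) * (|D1 r| * |g r|) := by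
            rw [abs_mul, abs_mul, abs_mul, abs_of_pos hγ0, abs_of_pos (by linarith : (0:ℝ) < 1 - γ)]
        _ ≤ γ * (|D2 r| + |Hc r|) + 1 * (|D1 r| * |g r|) := by
            refine add_le_add (mul_le_mul_of_nonneg_left (abs_add_le _ _) hγ0.le) ?_
            refine mul_le_mul_of_nonneg_right (by linarith) ?_
            exact mul_nonneg (abs_nonneg _) (abs_nonneg _)
        _ = γ * (|Δ2 r| + |H r|) + |Δ1 r| * |g r| := by
            rw [hD2e r hr.1, hHce r hr.1, hD1e r hr.1]; ring
        _ ≤ A * Real.exp (-η * (r - τ0)) := hgoal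
    · calc |f2 r| ≤ |γ * (D2 r + Hc r)| + |D1 r * g r| := by
            simp only [hf2def]; exact abs_add_le _ _
        _ = γ * |D2 r + Hc r| + |D1 r| * |g r| := by
            rw [abs_mul, abs_mul, abs_of_pos hγ0]
        _ ≤ γ * (|D2 r| + |Hc r|) + |D1 r| * |g r| := by
            exact add_le_add (mul_le_mul_of_nonneg_left (abs_add_le _ _) hγ0.le) le_rfl
        _ = γ * (|Δ2 r| + |H r|) + |Δ1 r| * |g r| := by
            rw [hD2e r hr.1, hHce r hr.1, hD1e r hr.1]
        _ ≤ A * Real.exp (-η * (r - τ0)) := hgoal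
  have hz1b : |z1 x| ≤ A / (1 - η) * Real.exp (-η * (x - τ0)) := by
    rw [hrep1 x hxmem.1]
    exact my_bound 1 η A τ0 x hxmem.1 (by linarith) hA0 f1 hf1cont
      (fun r hr => (hfb r ⟨hr.1, hr.2.trans hxmem.2⟩).1)
  have hz2b : |z2 x| ≤ A / (1 - γ - η) * Real.exp (-η * (x - τ0)) := by
    rw [hrep2 x hxmem.1]
    have := my_bound (1 - γ) η A τ0 x hxmem.1 (by linarith) hA0 f2 hf2cont
      (fun r hr => (hfb r ⟨hr.1, hr.2.trans hxmem.2⟩).2)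
    convert this using 3 <;> ring
  -- bound on |N x|
  have hNxb : |N x| ≤ (k / γ * (A / (1 - η) + (1 - 2 * γ) * (A / (1 - γ - η))) + c2)
      * Real.exp (-η * (x - τ0)) := by
    rw [hrec x hxmem.1]
    have hkγ : 0 < k / γ := by rw [hkdef]; exact div_pos (div_pos (by linarith) hγ0) hγ0
    calc |(-(k / γ * (z1 x - (1 - 2 * γ) * z2 x)) + Δ2 x)|
        ≤ |k / γ * (z1 x - (1 - 2 * γ) * z2 x)| + |Δ2 x| := by
          refine (abs_add_le _ _).trans ?_
          rw [abs_neg]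
      _ = k / γ * |z1 x - (1 - 2 * γ) * z2 x| + |Δ2 x| := by
          rw [abs_mul, abs_of_pos hkγ]
      _ ≤ k / γ * (|z1 x| + (1 - 2 * γ) * |z2 x|) + c2 * Real.exp (-η * (x - τ0)) := by
          refine add_le_add (mul_le_mul_of_nonneg_left ?_ hkγ.le) (hΔ2 x hxmem.1)
          refine (abs_sub _ _).trans ?_
          rw [abs_mul, abs_of_pos (by linarith : (0:ℝ) < 1 - 2 * γ)]
      _ ≤ k / γ * (A / (1 - η) * Real.exp (-η * (x - τ0))
            + (1 - 2 * γ) * (A / (1 - γ - η) * Real.exp (-η * (x - τ0))))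
            + c2 * Real.exp (-η * (x - τ0)) := by
          refine add_le_add (mul_le_mul_of_nonneg_left ?_ hkγ.le) le_rfl
          exact add_le_add hz1b (mul_le_mul_of_nonneg_left hz2b (by linarith))
      _ = (k / γ * (A / (1 - η) + (1 - 2 * γ) * (A / (1 - γ - η))) + c2)
            * Real.exp (-η * (x - τ0)) := by ring
  -- hence a bound on M
  have hMA : M ≤ k / γ * (A / (1 - η) + (1 - 2 * γ) * (A / (1 - γ - η))) + c2 := by
    have h := mul_le_mul_of_nonneg_right hNxb (Real.exp_pos (η * (x - τ0))).le
    have hleft : |N x| * Real.exp (η * (x - τ0)) = M := by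
      rw [hMdef, hmdef]
      simp only
      rw [hNce x hxmem.1]
    have hright : ((k / γ * (A / (1 - η) + (1 - 2 * γ) * (A / (1 - γ - η))) + c2)
        * Real.exp (-η * (x - τ0))) * Real.exp (η * (x - τ0))
        = k / γ * (A / (1 - η) + (1 - 2 * γ) * (A / (1 - γ - η))) + c2 := by
      rw [mul_assoc, ← Real.exp_add, show -η * (x - τ0) + η * (x - τ0) = 0 by ring,
        Real.exp_zero, mul_one]
    rw [hleft, hright] at h
    exact h
  clear_value m
  clear hxmax hrep1 hrep2 hrec hz1' hz2' hu' hV' hw' heq heq' hfb hNxb hz1b hz2b hgb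
    hf1cont hf2cont hmcont hgcont hD1cont hD2cont hHccont hNccont hq hqm hΔ1c hΔ2c hHc hNc
    hΔ1 hΔ2 hH hD1e hD2e hHce hNce hge hudef hVdef hwdef hz1def hz2def hf1def hf2def
    hD1def hD2def hHcdef hNcdef hgdef hmdef hu0 hV0 hz10 hz20
  -- arithmetic: deduce M ≤ c * (c2 + cH)
  have hM2 : M ≤ 4 * A / (γ ^ 2 * (1 - γ - η)) + c2 := by
    have hQ0 : 0 ≤ A / (1 - γ - η) := div_nonneg hA0 hγη.le
    have t1 : A / (1 - η) ≤ A / (1 - γ - η) :=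
      div_le_div_of_nonneg_left hA0 hγη (by linarith)
    have t2 : (1 - 2 * γ) * (A / (1 - γ - η)) ≤ 1 * (A / (1 - γ - η)) :=
      mul_le_mul_of_nonneg_right (by linarith) hQ0
    have t3 : k / γ ≤ 2 / γ ^ 2 := by
      rw [hkdef, div_div, show γ * γ = γ ^ 2 by ring]
      exact (div_le_div_iff_of_pos_right (by positivity)).mpr (by linarith)
    have t4 : 0 ≤ A / (1 - η) + (1 - 2 * γ) * (A / (1 - γ - η)) :=
      add_nonneg (div_nonneg hA0 (by linarith)) (mul_nonneg (by linarith) hQ0)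
    have t5 : k / γ * (A / (1 - η) + (1 - 2 * γ) * (A / (1 - γ - η)))
        ≤ 2 / γ ^ 2 * (2 * (A / (1 - γ - η))) := by
      refine mul_le_mul t3 ?_ t4 (by positivity)
      linarith
    have t6 : 2 / γ ^ 2 * (2 * (A / (1 - γ - η))) = 4 * A / (γ ^ 2 * (1 - γ - η)) := by
      field_simp
      ring
    rw [t6] at t5
    linarith
  have hMf : M ≤ (8 / (γ * (1 - γ - η)) + 2) * (c2 + cH) := by
    have hexp : 4 * A / (γ ^ 2 * (1 - γ - η))
        = 4 / (γ * (1 - γ - η)) * (c2 + cH) + γ / 4 * cH + γ / 4 * M := by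
      rw [hAdef, hεdef]
      field_simp
      ring
    rw [hexp] at hM2
    have hp1 : γ / 4 * M ≤ 1 / 8 * M := mul_le_mul_of_nonneg_right (by linarith) hM0
    have hp2 : γ / 4 * cH ≤ 1 / 8 * cH := mul_le_mul_of_nonneg_right (by linarith) hcH.le
    have hgoal : (8 / (γ * (1 - γ - η)) + 2) * (c2 + cH)
        = 2 * (4 / (γ * (1 - γ - η)) * (c2 + cH)) + 2 * (c2 + cH) := by ring
    have hPX : 0 ≤ 4 / (γ * (1 - γ - η)) * (c2 + cH) := by positivity
    rw [hgoal]
    set P := 4 / (γ * (1 - γ - η)) * (c2 + cH) with hP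
    linarith
  calc |N τf| ≤ M * Real.exp (-η * (τf - τ0)) := hNb τf ⟨hτf, le_rfl⟩
    _ ≤ (8 / (γ * (1 - γ - η)) + 2) * (c2 + cH) * Real.exp (-η * (τf - τ0)) :=
        mul_le_mul_of_nonneg_right hMf (Real.exp_pos _).le
end

section
/- Let β > 0, γ ∈ (0,1/2), θ := 1 + 1/(2γ), N_s := (β/(1−γ))^{1/2}, c_s := ((1−2γ)/4)·N_s, F_s(y) := c_s·(1+γy)^{−θ}. Let τ_0 > 0, η > 0, c_J > 0, and let J : [τ_0,∞) → ℝ be continuous with |J(τ)| ≤ c_J·e^{−η(τ−τ_0)} for all τ ≥ τ_0. Define M′(τ) := exp(∫_{τ_0}^τ (γ + J(ω)) dω), M(τ) := ∫_{τ_0}^τ M′(r) dr, and (T̃(τ,τ_0)Φ)(y) := e^{(τ−τ_0)/2}·M′(τ)·Φ(M′(τ)·y + M(τ)). Let Φ : (0,∞) → ℝ be continuous with (1+y)·Φ(y) integrable, suppose lim_{y→∞} y^θ·Φ(y) = c_Φ·γ^{−θ} for some c_Φ > 0, and suppose there exists c_N < N_s such that |∫_0^∞ y·(T̃(τ,τ_0)Φ)(y)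 dy − N_s| ≤ c_N·e^{−η(τ−τ_0)} for all τ ≥ τ_0. Then T̃(τ,τ_0)Φ converges to F_s as τ → ∞, uniformly on compact subsets of [0,∞). -/
open Real MeasureTheory Set Filter intervalIntegral
open scoped Topology

lemma cont_tail (m θ : ℝ) (hm : 0 < m) :
    ContinuousOn (fun y : ℝ => (y + m) ^ (1 - θ)) (Set.Ici (0:ℝ)) := by
  apply ContinuousOn.rpow_const (by fun_prop)
  intro y hy
  simp only [Set.mem_Ici] at hy
  exact Or.inl (by positivity)

lemma key_int (m θ : ℝ) (hm : 0 < m) (hθ : 2 < θ) :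
    IntegrableOn (fun y : ℝ => (y + m) ^ (1 - θ)) (Set.Ioi (0:ℝ)) := by
  have hIoi : Set.Ioi (0:ℝ) = Set.Ioc 0 1 ∪ Set.Ioi 1 := by
    rw [Set.Ioc_union_Ioi_eq_Ioi]; norm_num
  rw [hIoi]
  apply MeasureTheory.IntegrableOn.union
  · -- bounded on Ioc 0 1
    have hc : ContinuousOn (fun y : ℝ => (y + m) ^ (1 - θ)) (Set.Icc (0:ℝ) 1) :=
      (cont_tail m θ hm).mono (fun y hy => hy.1)
    exact (hc.integrableOn_compact isCompact_Icc).mono Set.Ioc_subset_Icc_self le_rfl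
  · -- comparison with y ^ (1-θ) on Ioi 1
    have h1 : IntegrableOn (fun y : ℝ => y ^ (1 - θ)) (Set.Ioi (1:ℝ)) :=
      integrableOn_Ioi_rpow_of_lt (by linarith) one_pos
    refine h1.mono' ?_ ?_
    · exact ((cont_tail m θ hm).mono (fun y hy => by simp only [Set.mem_Ioi, Set.mem_Ici] at *; linarith)).aestronglyMeasurable
        measurableSet_Ioi
    · filter_upwards [ae_restrict_mem measurableSet_Ioi] with y hy
      simp only [Set.mem_Ioi] at hy
      rw [Real.norm_eq_abs, abs_of_pos (rpow_pos_of_pos (by linarith) _)]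
      exact Real.rpow_le_rpow_of_nonpos (by linarith) (by linarith) (by linarith)

lemma int_aux (m θ : ℝ) (hm : 0 < m) (hθ : 2 < θ) :
    IntegrableOn (fun y : ℝ => y * (y + m) ^ (-θ)) (Set.Ioi (0:ℝ)) := by
  refine (key_int m θ hm hθ).mono' ?_ ?_
  · apply (ContinuousOn.mul continuousOn_id ?_).aestronglyMeasurable measurableSet_Ioi
    apply ContinuousOn.rpow_const (by fun_prop)
    intro y hy
    simp only [Set.mem_Ioi] at hy
    exact Or.inl (by positivity)
  · filter_upwards [ae_restrict_mem measurableSet_Ioi] with y hy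
    simp only [Set.mem_Ioi] at hy
    have h1 : (0:ℝ) < y + m := by linarith
    rw [Real.norm_eq_abs, abs_mul, abs_of_pos hy, abs_of_pos (rpow_pos_of_pos h1 _)]
    calc y * (y + m) ^ (-θ) ≤ (y + m) * (y + m) ^ (-θ) :=
          mul_le_mul_of_nonneg_right (by linarith) (le_of_lt (rpow_pos_of_pos h1 _))
      _ = (y + m) ^ (1 - θ) := by
          rw [← Real.rpow_one_add' (by positivity) (by intro h; linarith)]
          ring_nf

lemma int_base (γ θ : ℝ) (hγ : 0 < γ) (hθ : 2 < θ) :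
    IntegrableOn (fun y : ℝ => y * (1 + γ * y) ^ (-θ)) (Set.Ioi (0:ℝ)) := by
  have h := (int_aux γ⁻¹ θ (by positivity) hθ).const_mul (γ ^ (-θ))
  refine MeasureTheory.IntegrableOn.congr_fun h ?_ measurableSet_Ioi
  intro y hy
  simp only [Set.mem_Ioi] at hy
  have h1 : (0:ℝ) < y + γ⁻¹ := by positivity
  have h2 : (1 + γ*y) = γ * (y + γ⁻¹) := by field_simp; ring
  simp only []
  rw [h2, Real.mul_rpow hγ.le h1.le]
  ring

lemma moment_integral (γ θ : ℝ) (hγ : 0 < γ) (hγ2 : γ < 1/2) (hθ : θ = 1 + 1/(2*γ)) :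
    ∫ y in Set.Ioi (0:ℝ), y * (1 + γ * y) ^ (-θ) = 4 / (1 - 2*γ) := by
  have hγ' : γ ≠ 0 := ne_of_gt hγ
  have hθ2 : 2 < θ := by
    rw [hθ]
    have : 1 < 1/(2*γ) := by rw [lt_div_iff₀ (by linarith)]; linarith
    linarith
  have h2θ : (2 - θ) ≠ 0 := by linarith
  have h1θ : (1 - θ) ≠ 0 := by linarith
  set F : ℝ → ℝ := fun y => γ⁻¹ * γ⁻¹ *
      ((1 + γ*y) ^ (2-θ) / (2-θ) - (1 + γ*y) ^ (1-θ) / (1-θ)) with hF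
  have hderiv : ∀ y ∈ Set.Ici (0:ℝ), HasDerivAt F (y * (1 + γ * y) ^ (-θ)) y := by
    intro y hy
    simp only [Set.mem_Ici] at hy
    have hu : (0:ℝ) < 1 + γ * y := by positivity
    have hlin : HasDerivAt (fun y : ℝ => 1 + γ * y) γ y := by
      simpa using ((hasDerivAt_id y).const_mul γ).const_add 1
    have d1 : HasDerivAt (fun y : ℝ => (1 + γ*y) ^ (2-θ))
        (γ * (2-θ) * (1 + γ*y) ^ (2-θ-1)) y := hlin.rpow_const (Or.inl hu.ne')
    have d2 : HasDerivAt (fun y : ℝ => (1 + γ*y) ^ (1-θ))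
        (γ * (1-θ) * (1 + γ*y) ^ (1-θ-1)) y := hlin.rpow_const (Or.inl hu.ne')
    have := (((d1.div_const (2-θ)).sub (d2.div_const (1-θ))).const_mul (γ⁻¹ * γ⁻¹))
    refine this.congr_deriv ?_
    have e1 : (1 + γ*y) ^ (2-θ-1) = (1 + γ*y) * (1 + γ*y) ^ (-θ) := by
      rw [show (2-θ-1) = 1 + (-θ) by ring, Real.rpow_add hu, Real.rpow_one]
    have e2 : (1 + γ*y) ^ (1-θ-1) = (1 + γ*y) ^ (-θ) := by
      rw [show (1-θ-1 : ℝ) = -θ by ring]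
    rw [e1, e2]
    field_simp
    ring
  have htend : Tendsto F atTop (𝓝 0) := by
    have hbase : Tendsto (fun y : ℝ => 1 + γ * y) atTop atTop := by
      apply tendsto_atTop_add_const_left
      exact (tendsto_id.const_mul_atTop hγ)
    have t1 : Tendsto (fun y : ℝ => (1 + γ*y) ^ (2-θ)) atTop (𝓝 0) := by
      have := (tendsto_rpow_neg_atTop (y := θ - 2) (by linarith)).comp hbase
      simpa [Function.comp_def, neg_sub] using this
    have t2 : Tendsto (fun y : ℝ => (1 + γ*y) ^ (1-θ)) atTop (𝓝 0) := by
      have := (tendsto_rpow_neg_atTop (y := θ - 1) (by linarith)).comp hbase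
      simpa [Function.comp_def, neg_sub] using this
    have := (((t1.div_const (2-θ)).sub (t2.div_const (1-θ))).const_mul (γ⁻¹ * γ⁻¹))
    simpa using this
  have := MeasureTheory.integral_Ioi_of_hasDerivAt_of_tendsto' hderiv
    (int_base γ θ hγ hθ2) htend
  rw [this]
  simp only [hF, mul_zero, add_zero, Real.one_rpow]
  rw [hθ]
  have h2γ : (2*γ) ≠ 0 := by positivity
  have h12 : (1:ℝ) - 2*γ ≠ 0 := by intro h; apply (ne_of_lt hγ2); linarith
  have h12' : (-1:ℝ) + γ*2 ≠ 0 := by intro h; apply (ne_of_lt hγ2); linarith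
  field_simp [h12, h12', h2γ, hγ']
  have h3 : γ * 2 ^ 2 - (γ * 2 + 1) ≠ 0 := by intro h; apply (ne_of_lt hγ2); linarith
  have h4 : (1:ℝ) - γ * 2 ≠ 0 := by intro h; apply (ne_of_lt hγ2); linarith
  field_simp
  ring

set_option maxHeartbeats 1600000

/-- identification of the self-similar limit along characteristics:
if `Φ` has power-law tail `y^θ Φ(y) → c_Φ γ^{-θ}` and the first moment of the
evolved profile `T̃(τ,τ₀)Φ` converges to `N_s` exponentially, then
`T̃(τ,τ₀)Φ → F_s` uniformly on compact subsets of `[0,∞)`. -/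
theorem selfsimilar_limit_along_characteristics
    (β γ : ℝ) (hβ : 0 < β) (hγ : γ ∈ Set.Ioo (0 : ℝ) (1 / 2))
    (θ Ns cs : ℝ)
    (hθ : θ = 1 + 1 / (2 * γ))
    (hNs : Ns = Real.sqrt (β / (1 - γ)))
    (hcs : cs = (1 - 2 * γ) / 4 * Ns)
    (Fs : ℝ → ℝ)
    (hFs : ∀ y : ℝ, Fs y = cs * (1 + γ * y) ^ (-θ))
    (τ0 η cJ : ℝ) (hτ0 : 0 < τ0) (hη : 0 < η) (hcJ : 0 < cJ)
    (J : ℝ → ℝ) (hJc : ContinuousOn J (Set.Ici τ0))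
    (hJ : ∀ τ, τ0 ≤ τ → |J τ| ≤ cJ * Real.exp (-η * (τ - τ0)))
    (M' M : ℝ → ℝ)
    (hM' : ∀ τ : ℝ, M' τ = Real.exp (∫ ω in τ0..τ, (γ + J ω)))
    (hM : ∀ τ : ℝ, M τ = ∫ r in τ0..τ, M' r)
    (Φ : ℝ → ℝ) (hΦc : ContinuousOn Φ (Set.Ioi (0 : ℝ)))
    (hΦint : IntegrableOn (fun y => (1 + y) * Φ y) (Set.Ioi (0 : ℝ)))
    (cΦ : ℝ) (hcΦ : 0 < cΦ)
    (hlim : Filter.Tendsto (fun y : ℝ => y ^ θ * Φ y) Filter.atTop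
      (nhds (cΦ * γ ^ (-θ))))
    (cN : ℝ) (hcN : cN < Ns)
    (hmom : ∀ τ, τ0 ≤ τ →
      |(∫ y in Set.Ioi (0 : ℝ),
          y * (Real.exp ((τ - τ0) / 2) * M' τ * Φ (M' τ * y + M τ))) - Ns|
        ≤ cN * Real.exp (-η * (τ - τ0))) :
    ∀ K : Set ℝ, K ⊆ Set.Ici 0 → IsCompact K →
      TendstoUniformlyOn
        (fun τ y => Real.exp ((τ - τ0) / 2) * M' τ * Φ (M' τ * y + M τ))
        Fs Filter.atTop K := by
  obtain ⟨hγ0, hγ2⟩ := hγ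
  have hγ' : γ ≠ 0 := ne_of_gt hγ0
  have hθ2 : 2 < θ := by
    rw [hθ]
    have : 1 < 1/(2*γ) := by rw [lt_div_iff₀ (by linarith)]; linarith
    linarith
  -- globalized perturbation
  set Jt : ℝ → ℝ := fun t => J (max t τ0) with hJt_def
  have hJtc : Continuous Jt :=
    hJc.comp_continuous (by fun_prop) (fun t => Set.mem_Ici.2 (le_max_right _ _))
  have hJt_eq : ∀ t, τ0 ≤ t → Jt t = J t := by
    intro t ht; simp only [hJt_def, max_eq_left ht]
  have hJtb : ∀ t, τ0 ≤ t → |Jt t| ≤ cJ * Real.exp (-η * (t - τ0)) := by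
    intro t ht; rw [hJt_eq t ht]; exact hJ t ht
  -- integrability of Jt on [τ0, ∞)
  have hbd_int : IntegrableOn (fun t => cJ * Real.exp (-η * (t - τ0))) (Set.Ioi τ0) := by
    have h0 : IntegrableOn (fun t : ℝ => Real.exp (-η * t)) (Set.Ioi τ0) :=
      exp_neg_integrableOn_Ioi τ0 hη
    have h1 := h0.const_mul (cJ * Real.exp (η * τ0))
    refine MeasureTheory.IntegrableOn.congr_fun h1 ?_ measurableSet_Ioi
    intro t _
    simp only []
    rw [mul_assoc, ← Real.exp_add]
    ring_nf
  have hJt_int : IntegrableOn Jt (Set.Ioi τ0) := by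
    refine Integrable.mono' hbd_int (hJtc.aestronglyMeasurable.restrict) ?_
    filter_upwards [ae_restrict_mem measurableSet_Ioi] with t ht
    exact hJtb t (le_of_lt ht)
  -- the limit and bound for I
  set I : ℝ → ℝ := fun t => ∫ ω in τ0..t, Jt ω with hI_def
  have hIderiv : ∀ t, HasDerivAt I (Jt t) t := fun t =>
    (hJtc.integral_hasStrictDerivAt τ0 t).hasDerivAt
  have hIc : Continuous I := continuous_iff_continuousAt.2 fun t => (hIderiv t).continuousAt
  set Iinf : ℝ := ∫ t in Set.Ioi τ0, Jt t with hIinf_def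
  have hIlim : Tendsto I atTop (𝓝 Iinf) :=
    MeasureTheory.intervalIntegral_tendsto_integral_Ioi τ0 hJt_int tendsto_id
  set B : ℝ := ∫ t in Set.Ioi τ0, |Jt t| with hB_def
  have hB0 : 0 ≤ B := setIntegral_nonneg measurableSet_Ioi (fun t _ => abs_nonneg _)
  have hIB : ∀ t, τ0 ≤ t → |I t| ≤ B := by
    intro t ht
    have h1 : |I t| ≤ ∫ ω in τ0..t, |Jt ω| :=
      intervalIntegral.abs_integral_le_integral_abs ht
    have h2 : (∫ ω in τ0..t, |Jt ω|) = ∫ ω in Set.Ioc τ0 t, |Jt ω| :=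
      intervalIntegral.integral_of_le ht
    have h3 : (∫ ω in Set.Ioc τ0 t, |Jt ω|) ≤ B := by
      apply MeasureTheory.setIntegral_mono_set hJt_int.abs
      · filter_upwards [] with x using abs_nonneg _
      · exact HasSubset.Subset.eventuallyLE Set.Ioc_subset_Ioi_self
    linarith
  -- the explicit characteristic functions
  set g : ℝ → ℝ := fun t => Real.exp (γ * (t - τ0) + I t) with hg_def
  have hg0 : ∀ t, 0 < g t := fun t => Real.exp_pos _
  have hgderiv : ∀ t, HasDerivAt g ((γ + Jt t) * g t) t := by
    intro t
    have hinner : HasDerivAt (fun t => γ * (t - τ0) + I t) (γ + Jt t) t := by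
      have h1 : HasDerivAt (fun t : ℝ => γ * (t - τ0)) γ t := by
        simpa using ((hasDerivAt_id t).sub_const τ0).const_mul γ
      exact h1.add (hIderiv t)
    simpa [mul_comm] using hinner.exp
  have hgc : Continuous g := continuous_iff_continuousAt.2 fun t => (hgderiv t).continuousAt
  have hgτ0 : g τ0 = 1 := by
    simp [hg_def, hI_def, intervalIntegral.integral_same]
  set Mg : ℝ → ℝ := fun t => ∫ r in τ0..t, g r with hMg_def
  -- identification with M', M on [τ0, ∞)
  have hM'g : ∀ τ, τ0 ≤ τ → M' τ = g τ := by
    intro τ hτ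
    rw [hM' τ]
    congr 1
    have hEq : Set.EqOn (fun ω => γ + J ω) (fun ω => γ + Jt ω) (Set.uIcc τ0 τ) := by
      intro ω hω
      rw [Set.uIcc_of_le hτ] at hω
      simp only []
      rw [hJt_eq ω hω.1]
    rw [intervalIntegral.integral_congr hEq,
      intervalIntegral.integral_add (intervalIntegrable_const) (hJtc.intervalIntegrable τ0 τ),
      intervalIntegral.integral_const]
    simp [hg_def, hI_def, smul_eq_mul, mul_comm]
  have hMg : ∀ τ, τ0 ≤ τ → M τ = Mg τ := by
    intro τ hτ
    rw [hM τ]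
    apply intervalIntegral.integral_congr
    intro r hr
    rw [Set.uIcc_of_le hτ] at hr
    exact hM'g r hr.1
  -- the fundamental ODE identity
  have hkey : ∀ τ, g τ - 1 = γ * Mg τ + ∫ r in τ0..τ, Jt r * g r := by
    intro τ
    have h1 : (∫ r in τ0..τ, (γ + Jt r) * g r) = g τ - g τ0 :=
      intervalIntegral.integral_eq_sub_of_hasDerivAt
        (fun r _ => hgderiv r) (((continuous_const.add hJtc).mul hgc).intervalIntegrable τ0 τ)
    have h2 : (∫ r in τ0..τ, (γ + Jt r) * g r)
        = γ * Mg τ + ∫ r in τ0..τ, Jt r * g r := by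
      have : ∀ r, (γ + Jt r) * g r = γ * g r + Jt r * g r := fun r => by ring
      simp_rw [this]
      rw [intervalIntegral.integral_add (f := fun r => γ * g r) (g := fun r => Jt r * g r)
        ((continuous_const.mul hgc).intervalIntegrable τ0 τ)
        ((hJtc.mul hgc).intervalIntegrable τ0 τ), intervalIntegral.integral_const_mul]
    rw [hgτ0] at h1
    rw [← h2, h1]
  -- g tends to infinity
  have hgtop : Tendsto g atTop atTop := by
    apply Real.tendsto_exp_atTop.comp
    apply Filter.Tendsto.atTop_add ?_ hIlim
    apply Tendsto.const_mul_atTop hγ0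
    exact tendsto_atTop_add_const_right _ _ tendsto_id
  have hginv : Tendsto (fun τ => (g τ)⁻¹) atTop (𝓝 0) := hgtop.inv_tendsto_atTop
  -- comparison of g at different times
  have hgr : ∀ τ r, τ0 ≤ r → r ≤ τ →
      g r ≤ Real.exp (2 * B) * Real.exp (-γ * (τ - r)) * g τ := by
    intro τ r hr hrτ
    have h1 : g r = Real.exp (γ * (r - τ) + (I r - I τ)) * g τ := by
      rw [hg_def]
      simp only []
      rw [← Real.exp_add]
      congr 1
      ring
    rw [h1]
    apply mul_le_mul_of_nonneg_right ?_ (le_of_lt (hg0 τ))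
    rw [← Real.exp_add]
    apply Real.exp_le_exp.2
    have h2 := hIB r hr
    have h3 := hIB τ (le_trans hr hrτ)
    have h4 : I r - I τ ≤ 2 * B := by
      have := abs_le.1 h2
      have := abs_le.1 h3
      linarith [(abs_le.1 h2).2, (abs_le.1 h3).1]
    nlinarith [h4]
  -- the perturbation integral is negligible compared to g
  set m : ℝ := min η γ with hm_def
  have hm0 : 0 < m := lt_min hη hγ0
  have hJg : Tendsto (fun τ => (∫ r in τ0..τ, Jt r * g r) / g τ) atTop (𝓝 0) := by
    have hbound : ∀ τ, τ0 ≤ τ → |(∫ r in τ0..τ, Jt r * g r) / g τ|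
        ≤ cJ * Real.exp (2*B) * ((τ - τ0) * Real.exp (-m * (τ - τ0))) := by
      intro τ hτ
      have hC : ∀ r ∈ Set.uIoc τ0 τ, ‖Jt r * g r‖
          ≤ cJ * Real.exp (2*B) * Real.exp (-m * (τ - τ0)) * g τ := by
        intro r hr
        rw [Set.uIoc_of_le hτ] at hr
        obtain ⟨hr1, hr2⟩ := hr
        have h1 : |Jt r| ≤ cJ * Real.exp (-η * (r - τ0)) := hJtb r hr1.le
        have h2 : g r ≤ Real.exp (2 * B) * Real.exp (-γ * (τ - r)) * g τ :=
          hgr τ r hr1.le hr2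
        have h3 : ‖Jt r * g r‖ = |Jt r| * g r := by
          rw [norm_mul, Real.norm_eq_abs, Real.norm_eq_abs, abs_of_pos (hg0 r)]
        rw [h3]
        have h4 : |Jt r| * g r ≤ (cJ * Real.exp (-η * (r - τ0))) *
            (Real.exp (2 * B) * Real.exp (-γ * (τ - r)) * g τ) := by
          apply mul_le_mul h1 h2 (le_of_lt (hg0 r))
          positivity
        refine le_trans h4 ?_
        have h5 : Real.exp (-η * (r - τ0)) * Real.exp (-γ * (τ - r))
            ≤ Real.exp (-m * (τ - τ0)) := by
          rw [← Real.exp_add]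
          apply Real.exp_le_exp.2
          have e1 : m * (r - τ0) ≤ η * (r - τ0) :=
            mul_le_mul_of_nonneg_right (min_le_left _ _) (by linarith)
          have e2 : m * (τ - r) ≤ γ * (τ - r) :=
            mul_le_mul_of_nonneg_right (min_le_right _ _) (by linarith)
          nlinarith
        calc cJ * Real.exp (-η * (r - τ0)) * (Real.exp (2*B) * Real.exp (-γ * (τ - r)) * g τ)
            = cJ * Real.exp (2*B) * (Real.exp (-η * (r - τ0)) * Real.exp (-γ * (τ - r))) * g τ := by
              ring
          _ ≤ cJ * Real.exp (2*B) * Real.exp (-m * (τ - τ0)) * g τ := by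
              apply mul_le_mul_of_nonneg_right ?_ (le_of_lt (hg0 τ))
              apply mul_le_mul_of_nonneg_left h5 (by positivity)
      have hInt := intervalIntegral.norm_integral_le_of_norm_le_const hC
      rw [Real.norm_eq_abs] at hInt
      rw [abs_div, abs_of_pos (hg0 τ), div_le_iff₀ (hg0 τ)]
      rw [abs_of_nonneg (by linarith : (0:ℝ) ≤ τ - τ0)] at hInt
      calc |∫ r in τ0..τ, Jt r * g r| ≤ cJ * Real.exp (2*B) * Real.exp (-m * (τ - τ0)) * g τ * (τ - τ0) := hInt
        _ = cJ * Real.exp (2*B) * ((τ - τ0) * Real.exp (-m * (τ - τ0))) * g τ := by ring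
    have htail : Tendsto (fun τ => cJ * Real.exp (2*B) * ((τ - τ0) * Real.exp (-m * (τ - τ0))))
        atTop (𝓝 0) := by
      have h1 : Tendsto (fun s : ℝ => s * Real.exp (-s)) atTop (𝓝 0) := by
        simpa using tendsto_pow_mul_exp_neg_atTop_nhds_zero 1
      have h2 : Tendsto (fun τ : ℝ => m * (τ - τ0)) atTop atTop := by
        apply Tendsto.const_mul_atTop hm0
        exact tendsto_atTop_add_const_right _ _ tendsto_id
      have h3 := (h1.comp h2).const_mul (cJ * Real.exp (2*B) * m⁻¹)
      rw [mul_zero] at h3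
      apply h3.congr
      intro τ
      simp only [Function.comp]
      field_simp
    apply squeeze_zero_norm' ?_ htail
    filter_upwards [eventually_ge_atTop τ0] with τ hτ
    rw [Real.norm_eq_abs]
    exact hbound τ hτ
  -- the ratio Mg/g tends to 1/γ
  have hMg_ratio : Tendsto (fun τ => Mg τ / g τ) atTop (𝓝 γ⁻¹) := by
    have hrhs : Tendsto (fun τ => (1 - (g τ)⁻¹ - (∫ r in τ0..τ, Jt r * g r) / g τ) * γ⁻¹)
        atTop (𝓝 ((1 - 0 - 0) * γ⁻¹)) :=
      ((tendsto_const_nhds.sub hginv).sub hJg).mul_const γ⁻¹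
    rw [show ((1:ℝ) - 0 - 0) * γ⁻¹ = γ⁻¹ by ring] at hrhs
    apply hrhs.congr' ?_
    filter_upwards [eventually_ge_atTop τ0] with τ hτ
    have h1 := hkey τ
    have hgne : g τ ≠ 0 := ne_of_gt (hg0 τ)
    have h2 : Mg τ = (g τ - 1 - (∫ r in τ0..τ, Jt r * g r)) * γ⁻¹ := by
      field_simp
      linarith [h1]
    rw [h2]
    field_simp
  -- Mg tends to infinity
  have hMgtop : Tendsto Mg atTop atTop := by
    have h1 : Tendsto (fun τ => (Mg τ / g τ) * g τ) atTop atTop :=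
      Filter.Tendsto.pos_mul_atTop (by positivity) hMg_ratio hgtop
    apply h1.congr
    intro τ
    exact div_mul_cancel₀ _ (ne_of_gt (hg0 τ))
  -- the prefactor A and its limit L
  have h1θγ : (1 - θ) * γ = -(1/2) := by rw [hθ]; field_simp; ring
  set A : ℝ → ℝ := fun τ => Real.exp ((1-θ) * I τ) with hA_def
  set L : ℝ := Real.exp ((1-θ) * Iinf) with hL_def
  have hL0 : 0 < L := Real.exp_pos _
  have hAlim : Tendsto A atTop (𝓝 L) :=
    (Real.continuous_exp.tendsto _).comp (hIlim.const_mul (1-θ))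
  have hAB : ∀ τ, τ0 ≤ τ → A τ ≤ Real.exp (|1-θ| * B) := by
    intro τ hτ
    apply Real.exp_le_exp.2
    calc (1-θ) * I τ ≤ |(1-θ) * I τ| := le_abs_self _
      _ = |1-θ| * |I τ| := abs_mul _ _
      _ ≤ |1-θ| * B := mul_le_mul_of_nonneg_left (hIB τ hτ) (abs_nonneg _)
  -- the key algebraic factorization
  have hfact : ∀ τ, A τ = Real.exp ((τ - τ0)/2) * (g τ) ^ (1-θ) := by
    intro τ
    rw [hA_def]
    simp only []
    have hgt : (g τ) ^ (1-θ) = Real.exp ((γ * (τ - τ0) + I τ) * (1-θ)) := by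
      rw [hg_def]
      exact (Real.exp_mul _ _).symm
    rw [hgt, ← Real.exp_add]
    congr 1
    linear_combination (-(τ - τ0)) * h1θγ
  -- the limit profile with unknown constant
  set c0 : ℝ := cΦ * γ ^ (-θ) with hc0_def
  have hc00 : 0 < c0 := by
    apply mul_pos hcΦ (Real.rpow_pos_of_pos hγ0 _)
  set G : ℝ → ℝ := fun y => (L * cΦ) * (1 + γ * y) ^ (-θ) with hG_def
  have hGalt : ∀ y : ℝ, 0 ≤ y → G y = L * c0 * (y + γ⁻¹) ^ (-θ) := by
    intro y hy
    have h1 : (0:ℝ) < y + γ⁻¹ := by positivity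
    have h2 : 1 + γ * y = γ * (y + γ⁻¹) := by field_simp; ring
    rw [hG_def]
    simp only []
    rw [h2, Real.mul_rpow hγ0.le h1.le, hc0_def]
    ring
  set mq : ℝ := (2*γ)⁻¹ with hmq_def
  have hmq0 : 0 < mq := by positivity
  have hγ2mq : γ⁻¹ = 2 * mq := by rw [hmq_def]; field_simp
  have hmqγ : mq ≤ γ⁻¹ := by rw [hγ2mq]; linarith
  set QB : ℝ := mq ^ (-θ) with hQB_def
  have hQB0 : 0 < QB := Real.rpow_pos_of_pos hmq0 _
  have hQle : ∀ b : ℝ, mq ≤ b → b ^ (-θ) ≤ QB := by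
    intro b hb
    exact Real.rpow_le_rpow_of_nonpos hmq0 hb (by linarith)
  have hfact2 : ∀ τ, τ0 ≤ τ → ∀ y : ℝ, 0 ≤ y → 0 < g τ * y + Mg τ →
      Real.exp ((τ - τ0)/2) * M' τ * Φ (M' τ * y + M τ)
        = A τ * ((g τ * y + Mg τ) ^ θ * Φ (g τ * y + Mg τ)) * (y + Mg τ / g τ) ^ (-θ) := by
    intro τ h1 y hy0 hzpos
    set z : ℝ := g τ * y + Mg τ with hz_def
    set ρ : ℝ := Mg τ / g τ with hρ_def
    have hzθ : z ^ θ ≠ 0 := ne_of_gt (Real.rpow_pos_of_pos hzpos θ)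
    rw [hM'g τ h1, hMg τ h1]
    have hyρ : y + ρ = z / g τ := by
      rw [hρ_def, hz_def]
      rw [add_div, mul_div_cancel_left₀ _ (ne_of_gt (hg0 τ))]
    rw [hyρ]
    have e1 : (z / g τ) ^ (-θ) = (g τ) ^ θ / z ^ θ := by
      rw [Real.rpow_neg (by positivity), Real.div_rpow hzpos.le (hg0 τ).le, inv_div]
    rw [e1, hfact τ, div_eq_mul_inv]
    have e2 : (g τ)^(1-θ) * (g τ)^θ = g τ := by
      rw [← Real.rpow_add (hg0 τ)]
      simp
    calc Real.exp ((τ - τ0)/2) * g τ * Φ z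
        = (Real.exp ((τ-τ0)/2) * ((g τ)^(1-θ) * (g τ)^θ)) * Φ z * 1 := by
          rw [e2]; ring
      _ = (Real.exp ((τ-τ0)/2) * ((g τ)^(1-θ) * (g τ)^θ)) * Φ z * (z^θ * (z^θ)⁻¹) := by
          rw [mul_inv_cancel₀ hzθ]
      _ = (Real.exp ((τ-τ0)/2) * (g τ)^(1-θ)) * (z ^ θ * Φ z) * ((g τ)^θ * (z^θ)⁻¹) := by
          ring
  -- the main uniform convergence, towards G
  have hUG : ∀ K : Set ℝ, K ⊆ Set.Ici 0 → IsCompact K →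
      TendstoUniformlyOn
        (fun τ y => Real.exp ((τ - τ0) / 2) * M' τ * Φ (M' τ * y + M τ))
        G Filter.atTop K := by
    intro K hK0 hKc
    rw [Metric.tendstoUniformlyOn_iff]
    intro ε hε
    obtain ⟨R, hR⟩ := hKc.isBounded.subset_closedBall 0
    have hRmem : ∀ y ∈ K, 0 ≤ y ∧ y ≤ R := by
      intro y hy
      refine ⟨hK0 hy, ?_⟩
      have := hR hy
      rw [Metric.mem_closedBall, Real.dist_eq, sub_zero] at this
      exact (abs_le.1 this).2
    set S : Set ℝ := Set.Icc mq (R + 2*γ⁻¹) with hS_def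
    have hcontS : ContinuousOn (fun t : ℝ => t ^ (-θ)) S := by
      apply ContinuousOn.rpow_const continuousOn_id
      intro t ht
      exact Or.inl (ne_of_gt (lt_of_lt_of_le hmq0 ht.1))
    have huc := isCompact_Icc.uniformContinuousOn_of_continuous hcontS
    rw [Metric.uniformContinuousOn_iff] at huc
    set ε3 : ℝ := ε/3 with hε3_def
    have hε30 : 0 < ε3 := by positivity
    have harith : ∀ x : ℝ, 0 ≤ x → x * (ε3/(x+1)) < ε3 := by
      intro x hx
      rw [show x * (ε3/(x+1)) = ε3 * (x/(x+1)) by ring]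
      have h2 : x/(x+1) < 1 := (div_lt_one (by linarith)).2 (by linarith)
      calc ε3 * (x/(x+1)) < ε3 * 1 := mul_lt_mul_of_pos_left h2 hε30
        _ = ε3 := mul_one _
    set δA : ℝ := ε3 / ((c0+1) * QB + 1) with hδA_def
    have hδA0 : 0 < δA := by positivity
    set δP : ℝ := min 1 (ε3 / (L * QB + 1)) with hδP_def
    have hδP0 : 0 < δP := lt_min one_pos (by positivity)
    obtain ⟨δq, hδq0, hδq⟩ := huc (ε3 / (L * c0 + 1)) (by positivity)
    obtain ⟨z1, hz1⟩ := Filter.eventually_atTop.1 (Metric.tendsto_nhds.1 hlim δP hδP0)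
    have E2 : ∀ᶠ τ in Filter.atTop, |A τ - L| < δA := by
      have := Metric.tendsto_nhds.1 hAlim δA hδA0
      simpa [Real.dist_eq] using this
    have E3 : ∀ᶠ τ in Filter.atTop, max z1 1 ≤ Mg τ := hMgtop.eventually_ge_atTop _
    have E4 : ∀ᶠ τ in Filter.atTop, |Mg τ / g τ - γ⁻¹| < min δq mq := by
      have := Metric.tendsto_nhds.1 hMg_ratio _ (lt_min hδq0 hmq0)
      simpa [Real.dist_eq] using this
    filter_upwards [eventually_ge_atTop τ0, E2, E3, E4] with τ h1 h2 h3 h4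
    intro y hy
    obtain ⟨hy0, hyR⟩ := hRmem y hy
    set ρ : ℝ := Mg τ / g τ with hρ_def
    have hρ1 : mq ≤ ρ := by
      linarith [(abs_lt.1 h4).1, min_le_right δq mq, hγ2mq]
    have hρ2 : ρ ≤ γ⁻¹ + mq := by
      have := (abs_lt.1 h4).2
      have hmm : min δq mq ≤ mq := min_le_right _ _
      linarith
    set z : ℝ := g τ * y + Mg τ with hz_def
    have hzMg : Mg τ ≤ z := by
      rw [hz_def]
      have : 0 ≤ g τ * y := mul_nonneg (hg0 τ).le hy0
      linarith
    have hzz1 : z1 ≤ z := le_trans (le_trans (le_max_left _ _) h3) hzMg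
    have hzpos : (0:ℝ) < z := lt_of_lt_of_le one_pos (le_trans (le_trans (le_max_right _ _) h3) hzMg)
    have hzθ : z ^ θ ≠ 0 := ne_of_gt (Real.rpow_pos_of_pos hzpos θ)
    have hfτ : Real.exp ((τ - τ0)/2) * M' τ * Φ (M' τ * y + M τ)
        = A τ * (z ^ θ * Φ z) * (y + ρ) ^ (-θ) := by
      have := hfact2 τ h1 y hy0 hzpos
      rw [← hz_def, ← hρ_def] at this
      exact this
    -- membership in the compact interval
    have hyρS : y + ρ ∈ S := by
      constructor
      · linarith
      · linarith
    have hyγS : y + γ⁻¹ ∈ S := by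
      constructor
      · linarith
      · linarith
    -- bounds on the three factors
    have hQb : (y+ρ)^(-θ) ≤ QB := hQle _ (by linarith)
    have hQpos : (0:ℝ) < (y+ρ)^(-θ) := Real.rpow_pos_of_pos (by linarith) _
    have hPd : |z^θ * Φ z - c0| < δP := by
      have := hz1 z hzz1
      rwa [Real.dist_eq] at this
    have hPb : |z^θ * Φ z| ≤ c0 + 1 := by
      have h5 : δP ≤ 1 := min_le_left _ _
      calc |z^θ * Φ z| ≤ |z^θ * Φ z - c0| + |c0| := by
            have := abs_sub_abs_le_abs_sub (z^θ * Φ z) c0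
            have := abs_add_le (z^θ * Φ z - c0) c0
            calc |z^θ * Φ z| = |(z^θ * Φ z - c0) + c0| := by ring_nf
              _ ≤ |z^θ * Φ z - c0| + |c0| := abs_add_le _ _
        _ ≤ c0 + 1 := by
            rw [abs_of_pos hc00]
            linarith
    have hQd : |(y+ρ)^(-θ) - (y+γ⁻¹)^(-θ)| < ε3/(L*c0+1) := by
      have hdist : dist (y+ρ) (y+γ⁻¹) < δq := by
        rw [Real.dist_eq]
        have : y + ρ - (y + γ⁻¹) = ρ - γ⁻¹ := by ring
        rw [this]
        exact lt_of_lt_of_le h4 (min_le_left _ _)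
      have := hδq (y+ρ) hyρS (y+γ⁻¹) hyγS hdist
      rwa [Real.dist_eq] at this
    -- conclusion
    rw [Real.dist_eq, hfτ, hGalt y hy0]
    set P : ℝ := z^θ * Φ z with hP_def
    set Q : ℝ := (y+ρ)^(-θ) with hQ_def
    set Qi : ℝ := (y+γ⁻¹)^(-θ) with hQi_def
    have t1 : |L*c0*Qi - L*c0*Q| < ε3 := by
      rw [show L*c0*Qi - L*c0*Q = (L*c0)*(Qi - Q) by ring, abs_mul,
        abs_of_pos (by positivity : (0:ℝ) < L*c0)]
      calc L*c0 * |Qi - Q| ≤ L*c0 * (ε3/(L*c0+1)) := by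
            apply mul_le_mul_of_nonneg_left ?_ (by positivity)
            rw [abs_sub_comm]
            exact le_of_lt hQd
        _ < ε3 := harith _ (by positivity)
    have t2 : |L*c0*Q - L*P*Q| < ε3 := by
      rw [show L*c0*Q - L*P*Q = L*((c0 - P)*Q) by ring, abs_mul,
        abs_of_pos hL0, abs_mul, abs_of_pos hQpos]
      have hb1 : |c0 - P| * Q ≤ δP * QB := by
        apply mul_le_mul ?_ hQb hQpos.le hδP0.le
        rw [abs_sub_comm]
        exact le_of_lt hPd
      calc L * (|c0 - P| * Q) ≤ L * (δP * QB) := mul_le_mul_of_nonneg_left hb1 hL0.le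
        _ ≤ L * ((ε3 / (L * QB + 1)) * QB) := by
            apply mul_le_mul_of_nonneg_left ?_ hL0.le
            apply mul_le_mul_of_nonneg_right (min_le_right _ _) hQB0.le
        _ = (L * QB) * (ε3 / (L * QB + 1)) := by ring
        _ < ε3 := harith _ (by positivity)
    have t3 : |L*P*Q - A τ*P*Q| < ε3 := by
      rw [show L*P*Q - A τ*P*Q = (L - A τ)*(P*Q) by ring, abs_mul, abs_mul,
        abs_of_pos hQpos]
      have hb1 : |P| * Q ≤ (c0+1) * QB :=
        mul_le_mul hPb hQb hQpos.le (by positivity)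
      have hb2 : |L - A τ| < δA := by rw [abs_sub_comm]; exact h2
      calc |L - A τ| * (|P| * Q) ≤ |L - A τ| * ((c0+1)*QB) :=
            mul_le_mul_of_nonneg_left hb1 (abs_nonneg _)
        _ ≤ δA * ((c0+1)*QB) := mul_le_mul_of_nonneg_right hb2.le (by positivity)
        _ = ((c0+1)*QB) * (ε3/((c0+1)*QB+1)) := by rw [hδA_def]; ring
        _ < ε3 := harith _ (by positivity)
    calc |L * c0 * Qi - A τ * P * Q|
        ≤ |L*c0*Qi - L*c0*Q| + |L*c0*Q - A τ * P * Q| := abs_sub_le _ _ _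
      _ ≤ |L*c0*Qi - L*c0*Q| + (|L*c0*Q - L*P*Q| + |L*P*Q - A τ*P*Q|) := by
          linarith [abs_sub_le (L*c0*Q) (L*P*Q) (A τ*P*Q)]
      _ < ε3 + (ε3 + ε3) := by linarith
      _ = ε := by rw [hε3_def]; ring
  -- nonnegativity of Mg
  have hMg0 : ∀ τ, τ0 ≤ τ → 0 ≤ Mg τ := fun τ hτ =>
    intervalIntegral.integral_nonneg hτ (fun r _ => (hg0 r).le)
  -- pointwise convergence
  have hpt : ∀ y : ℝ, 0 ≤ y →
      Tendsto (fun τ => Real.exp ((τ - τ0)/2) * M' τ * Φ (M' τ * y + M τ))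
        atTop (𝓝 (G y)) := by
    intro y hy
    have h := hUG {y} (by simpa using hy) isCompact_singleton
    rw [tendstoUniformlyOn_singleton_iff_tendsto] at h
    exact h
  -- tail threshold for domination
  obtain ⟨z2, hz2⟩ := Filter.eventually_atTop.1 (Metric.tendsto_nhds.1 hlim 1 one_pos)
  set CB : ℝ := Real.exp (|1-θ| * B) * (c0+1) with hCB_def
  -- dominated convergence for the first moment
  have hmomlim : Tendsto (fun τ => ∫ y in Set.Ioi (0:ℝ),
      y * (Real.exp ((τ - τ0)/2) * M' τ * Φ (M' τ * y + M τ))) atTop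
      (𝓝 (∫ y in Set.Ioi (0:ℝ), y * G y)) := by
    have E3' : ∀ᶠ τ in Filter.atTop, max z2 1 ≤ Mg τ := hMgtop.eventually_ge_atTop _
    have E4' : ∀ᶠ τ in Filter.atTop, |Mg τ / g τ - γ⁻¹| < mq := by
      have := Metric.tendsto_nhds.1 hMg_ratio mq hmq0
      simpa [Real.dist_eq] using this
    apply MeasureTheory.tendsto_integral_filter_of_dominated_convergence
      (bound := fun y => CB * (y * (y + mq) ^ (-θ)))
    · -- measurability
      filter_upwards [eventually_ge_atTop τ0] with τ h1
      apply ContinuousOn.aestronglyMeasurable ?_ measurableSet_Ioi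
      apply ContinuousOn.mul continuousOn_id
      apply ContinuousOn.mul continuousOn_const
      apply hΦc.comp ((continuous_const.mul continuous_id).add continuous_const).continuousOn
      intro y hy
      simp only [Set.mem_Ioi] at hy ⊢
      have h2 : 0 < M' τ := by rw [hM'g τ h1]; exact hg0 τ
      have h3 : 0 ≤ M τ := by rw [hMg τ h1]; exact hMg0 τ h1
      have : 0 < M' τ * y := mul_pos h2 hy
      simp only [Pi.add_apply, Pi.mul_apply, id]
      linarith
    · -- uniform bound
      filter_upwards [eventually_ge_atTop τ0, E3', E4'] with τ h1 h3 h4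
      filter_upwards [ae_restrict_mem measurableSet_Ioi] with y hy
      simp only [Set.mem_Ioi] at hy
      have hy0 : (0:ℝ) ≤ y := hy.le
      have hzMg : Mg τ ≤ g τ * y + Mg τ := by
        have : 0 ≤ g τ * y := mul_nonneg (hg0 τ).le hy0
        linarith
      have hzpos : (0:ℝ) < g τ * y + Mg τ :=
        lt_of_lt_of_le one_pos (le_trans (le_trans (le_max_right _ _) h3) hzMg)
      have hρ1 : mq ≤ Mg τ / g τ := by
        linarith [(abs_lt.1 h4).1, hγ2mq]
      rw [Real.norm_eq_abs, hfact2 τ h1 y hy0 hzpos]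
      set z : ℝ := g τ * y + Mg τ with hz_def
      set ρ : ℝ := Mg τ / g τ with hρ_def
      have hA0 : 0 < A τ := Real.exp_pos _
      have hQpos : (0:ℝ) < (y+ρ)^(-θ) := Real.rpow_pos_of_pos (by linarith) _
      have hPb : |z^θ * Φ z| ≤ c0 + 1 := by
        have h5 := hz2 z (le_trans (le_trans (le_max_left _ _) h3) hzMg)
        rw [Real.dist_eq] at h5
        calc |z^θ * Φ z| = |(z^θ * Φ z - c0) + c0| := by ring_nf
          _ ≤ |z^θ * Φ z - c0| + |c0| := abs_add_le _ _
          _ ≤ c0 + 1 := by rw [abs_of_pos hc00]; linarith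
      have hQb : (y+ρ)^(-θ) ≤ (y+mq)^(-θ) :=
        Real.rpow_le_rpow_of_nonpos (by linarith) (by linarith) (by linarith)
      calc |y * (A τ * (z^θ * Φ z) * (y+ρ)^(-θ))|
          = y * A τ * |z^θ * Φ z| * (y+ρ)^(-θ) := by
            rw [abs_mul, abs_mul, abs_mul, abs_of_nonneg hy0, abs_of_pos hA0,
              abs_of_pos hQpos]
            ring
        _ ≤ y * Real.exp (|1-θ| * B) * (c0+1) * (y+mq)^(-θ) := by
            apply mul_le_mul ?_ hQb hQpos.le ?_
            · apply mul_le_mul ?_ hPb (abs_nonneg _) ?_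
              · exact mul_le_mul_of_nonneg_left (hAB τ h1) hy0
              · positivity
            · positivity
        _ = CB * (y * (y + mq) ^ (-θ)) := by rw [hCB_def]; ring
    · -- integrability of the bound
      exact (int_aux mq θ hmq0 hθ2).const_mul CB
    · -- pointwise limit
      filter_upwards [ae_restrict_mem measurableSet_Ioi] with y hy
      simp only [Set.mem_Ioi] at hy
      exact (hpt y hy.le).const_mul y
  -- the moment converges to Ns
  have hSN : Tendsto (fun τ => ∫ y in Set.Ioi (0:ℝ),
      y * (Real.exp ((τ - τ0)/2) * M' τ * Φ (M' τ * y + M τ))) atTop (𝓝 Ns) := by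
    have hdiff : Tendsto (fun τ => (∫ y in Set.Ioi (0:ℝ),
        y * (Real.exp ((τ - τ0)/2) * M' τ * Φ (M' τ * y + M τ))) - Ns) atTop (𝓝 0) := by
      apply squeeze_zero_norm' ?_ ?_
      · exact fun τ => |cN| * Real.exp (-η * (τ - τ0))
      · filter_upwards [eventually_ge_atTop τ0] with τ hτ
        rw [Real.norm_eq_abs]
        calc |(∫ y in Set.Ioi (0:ℝ),
              y * (Real.exp ((τ - τ0)/2) * M' τ * Φ (M' τ * y + M τ))) - Ns|
            ≤ cN * Real.exp (-η * (τ - τ0)) := hmom τ hτ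
          _ ≤ |cN| * Real.exp (-η * (τ - τ0)) :=
              mul_le_mul_of_nonneg_right (le_abs_self _) (Real.exp_pos _).le
      · have h1 : Tendsto (fun τ : ℝ => -η * (τ - τ0)) atTop atBot := by
          apply Tendsto.const_mul_atTop_of_neg (by linarith)
          exact tendsto_atTop_add_const_right _ _ tendsto_id
        have h2 := (Real.tendsto_exp_atBot.comp h1).const_mul |cN|
        simpa using h2
    have := hdiff.add_const Ns
    simpa using this
  have hNs_eq : Ns = ∫ y in Set.Ioi (0:ℝ), y * G y := tendsto_nhds_unique hSN hmomlim
  -- compute the limiting moment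
  have hGint : (∫ y in Set.Ioi (0:ℝ), y * G y) = (L * cΦ) * (4 / (1-2*γ)) := by
    have h1 : ∀ y : ℝ, y * G y = (L*cΦ) * (y * (1+γ*y)^(-θ)) := by
      intro y
      rw [hG_def]
      ring
    simp_rw [h1]
    rw [MeasureTheory.integral_const_mul, moment_integral γ θ hγ0 hγ2 hθ]
  -- identify the constant
  have h12 : (1:ℝ) - 2*γ ≠ 0 := by intro h; exact (ne_of_lt hγ2) (by linarith)
  have hLc : L * cΦ = cs := by
    have h := hNs_eq.trans hGint
    rw [hcs]
    field_simp at h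
    linear_combination -h / 4
  -- conclusion
  have hGFs : G = Fs := by
    funext y
    rw [hG_def]
    simp only []
    rw [hLc, hFs y]
  intro K hK0 hKc
  rw [← hGFs]
  exact hUG K hK0 hKc
end

section
/- Let θ > 2 and c ∈ ℝ, and let Φ : (0,∞) → ℝ be measurable with y ↦ (1+y)·Φ(y) integrable on (0,∞) and lim_{y→∞} y^θ·Φ(y) = c. Define ν(r) := ∫_r^∞ (y − r)·Φ(y) dy for r > 0. Then lim_{r→∞} r^{θ−2}·ν(r) = c/((θ−1)(θ−2)). -/
open Real MeasureTheory Set Filter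

/-- tail asymptotics of the truncated first moment: if
`y^θ Φ(y) → c` with `θ > 2` and `(1+y)Φ(y)` is integrable on `(0,∞)`, then
`r^{θ-2} ν(r) → c/((θ-1)(θ-2))` where `ν(r) = ∫_r^∞ (y-r)Φ(y) dy`. -/
theorem truncated_moment_tail_asymptotics
    (θ c : ℝ) (hθ : 2 < θ)
    (Φ : ℝ → ℝ) (hmeas : Measurable Φ)
    (hint : IntegrableOn (fun y => (1 + y) * Φ y) (Set.Ioi (0 : ℝ)))
    (hlim : Filter.Tendsto (fun y : ℝ => y ^ θ * Φ y) Filter.atTop (nhds c)) :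
    Filter.Tendsto
      (fun r : ℝ => r ^ (θ - 2) * ∫ y in Set.Ioi r, (y - r) * Φ y)
      Filter.atTop (nhds (c / ((θ - 1) * (θ - 2)))) := by
  set g : ℝ → ℝ := fun y => y ^ θ * Φ y with hg
  -- eventual bound on g
  obtain ⟨R, hR⟩ : ∃ R : ℝ, 1 ≤ R ∧ ∀ y, R ≤ y → |g y| ≤ |c| + 1 := by
    have h1 : ∀ᶠ y in atTop, |g y - c| ≤ 1 := by
      have := hlim.eventually (Metric.closedBall_mem_nhds c one_pos)
      simpa [Real.dist_eq] using this
    obtain ⟨R0, hR0⟩ := (h1.and (eventually_ge_atTop (1:ℝ))).exists_forall_of_atTop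
    exact ⟨max R0 1, le_max_right _ _, fun y hy => by
      have := hR0 y (le_trans (le_max_left _ _) hy)
      calc |g y| = |(g y - c) + c| := by ring_nf
        _ ≤ |g y - c| + |c| := abs_add_le _ _
        _ ≤ 1 + |c| := by linarith [this.1]
        _ = |c| + 1 := by ring⟩
  -- the family of integrands after change of variables
  set F : ℝ → ℝ → ℝ := fun r u => (u - 1) * u ^ (-θ) * g (r * u) with hF
  -- bound
  have hbound_int : Integrable (fun u => (u - 1) * u ^ (-θ) * (|c| + 1))
      (volume.restrict (Ioi (1:ℝ))) := by
    have h1 : IntegrableOn (fun u : ℝ => u ^ (1 - θ)) (Ioi (1:ℝ)) :=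
      integrableOn_Ioi_rpow_of_lt (by linarith) one_pos
    have h2 : IntegrableOn (fun u : ℝ => u ^ (-θ)) (Ioi (1:ℝ)) :=
      integrableOn_Ioi_rpow_of_lt (by linarith) one_pos
    have : IntegrableOn (fun u : ℝ => u ^ (1 - θ) - u ^ (-θ)) (Ioi (1:ℝ)) := h1.sub h2
    have heq : ∀ u ∈ Ioi (1:ℝ), (u ^ (1 - θ) - u ^ (-θ)) * (|c| + 1)
        = (u - 1) * u ^ (-θ) * (|c| + 1) := by
      intro u hu
      have hu0 : (0:ℝ) < u := lt_trans one_pos hu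
      have : u ^ (1 - θ) = u * u ^ (-θ) := by
        rw [show (1 - θ) = 1 + (-θ) by ring, Real.rpow_add hu0, Real.rpow_one]
      rw [this]; ring
    exact (IntegrableOn.congr_fun (this.mul_const (|c| + 1)) heq measurableSet_Ioi)
  -- limit integrand
  have hkey : Tendsto (fun r => ∫ u in Ioi (1:ℝ), F r u) atTop
      (nhds (∫ u in Ioi (1:ℝ), (u - 1) * u ^ (-θ) * c)) := by
    apply tendsto_integral_filter_of_dominated_convergence
      (fun u => (u - 1) * u ^ (-θ) * (|c| + 1))
    · filter_upwards with r
      apply Measurable.aestronglyMeasurable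
      have : Measurable fun u : ℝ => (u - 1) * u ^ (-θ) * ((r * u) ^ θ * Φ (r * u)) := by
        fun_prop
      exact this
    · filter_upwards [eventually_ge_atTop R] with r hr
      filter_upwards [ae_restrict_mem measurableSet_Ioi] with u hu
      have hu1 : (1:ℝ) < u := hu
      have hu0 : (0:ℝ) < u := lt_trans one_pos hu1
      have hRy : R ≤ r * u := by
        calc R ≤ r := hr
          _ = r * 1 := (mul_one r).symm
          _ ≤ r * u := by nlinarith [hR.1]
      have hb := hR.2 _ hRy
      have h1 : (0:ℝ) ≤ (u - 1) * u ^ (-θ) :=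
        mul_nonneg (by linarith) (Real.rpow_nonneg hu0.le _)
      calc ‖F r u‖ = (u - 1) * u ^ (-θ) * |g (r * u)| := by
            rw [Real.norm_eq_abs, abs_mul, abs_of_nonneg h1]
        _ ≤ (u - 1) * u ^ (-θ) * (|c| + 1) := by
            exact mul_le_mul_of_nonneg_left hb h1
    · exact hbound_int
    · filter_upwards [ae_restrict_mem measurableSet_Ioi] with u hu
      have hu0 : (0:ℝ) < u := lt_trans one_pos hu
      have h1 : Tendsto (fun r : ℝ => r * u) atTop atTop :=
        Tendsto.atTop_mul_const hu0 tendsto_id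
      exact (hlim.comp h1).const_mul _
  -- compute the limiting integral
  have hval : (∫ u in Ioi (1:ℝ), (u - 1) * u ^ (-θ) * c) = c / ((θ - 1) * (θ - 2)) := by
    have h1 : IntegrableOn (fun u : ℝ => u ^ (1 - θ)) (Ioi (1:ℝ)) :=
      integrableOn_Ioi_rpow_of_lt (by linarith) one_pos
    have h2 : IntegrableOn (fun u : ℝ => u ^ (-θ)) (Ioi (1:ℝ)) :=
      integrableOn_Ioi_rpow_of_lt (by linarith) one_pos
    have heq : ∀ u ∈ Ioi (1:ℝ), (u ^ (1 - θ) - u ^ (-θ)) * c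
        = (u - 1) * u ^ (-θ) * c := by
      intro u hu
      have hu0 : (0:ℝ) < u := lt_trans one_pos hu
      have : u ^ (1 - θ) = u * u ^ (-θ) := by
        rw [show (1 - θ) = 1 + (-θ) by ring, Real.rpow_add hu0, Real.rpow_one]
      rw [this]; ring
    rw [← setIntegral_congr_fun measurableSet_Ioi heq]
    rw [integral_mul_const, integral_sub h1 h2,
      integral_Ioi_rpow_of_lt (by linarith : 1 - θ < -1) one_pos,
      integral_Ioi_rpow_of_lt (by linarith : -θ < -1) one_pos]
    rw [Real.one_rpow, Real.one_rpow]
    have hθ1 : (1:ℝ) - θ + 1 ≠ 0 := by intro h; nlinarith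
    have hθ2 : -θ + 1 ≠ 0 := by intro h; nlinarith
    have hθ3 : (θ - 1) * (θ - 2) ≠ 0 := by
      apply mul_ne_zero <;> intro h <;> nlinarith [sub_eq_zero.mp h]
    field_simp
    ring_nf
    have hq : (2 - θ * 3 + θ ^ 2) ≠ 0 := by
      intro h; apply hθ3; linear_combination h
    field_simp
    ring
    try exact Or.inl trivial
  rw [← hval]
  -- show the original function eventually equals the substituted integral
  apply hkey.congr'
  filter_upwards [eventually_gt_atTop (0:ℝ)] with r hr
  have hr0 : (0:ℝ) < r := hr
  -- change of variables
  have hcv := integral_comp_mul_left_Ioi (fun y => (y - r) * Φ y) 1 hr0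
  simp only [mul_one, smul_eq_mul] at hcv
  -- rewrite F r on Ioi 1
  have heq : ∀ u ∈ Ioi (1:ℝ), F r u = r ^ (θ - 1) * ((r * u - r) * Φ (r * u)) := by
    intro u hu
    have hu0 : (0:ℝ) < u := lt_trans one_pos hu
    have hru : (r * u) ^ θ = r ^ θ * u ^ θ := Real.mul_rpow hr0.le hu0.le
    have huu : u ^ (-θ) * u ^ θ = 1 := by
      rw [← Real.rpow_add hu0]; simp
    have hr1 : r ^ (θ - 1) * r = r ^ θ := by
      rw [← Real.rpow_add_one hr0.ne' (θ - 1)]; ring_nf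
    calc F r u = (u - 1) * u ^ (-θ) * ((r * u) ^ θ * Φ (r * u)) := rfl
      _ = (u ^ (-θ) * u ^ θ) * ((u - 1) * r ^ θ * Φ (r * u)) := by rw [hru]; ring
      _ = (u - 1) * r ^ θ * Φ (r * u) := by rw [huu]; ring
      _ = r ^ (θ - 1) * ((r * u - r) * Φ (r * u)) := by
          rw [← hr1]; ring
  rw [setIntegral_congr_fun measurableSet_Ioi heq, integral_const_mul, hcv]
  have : r ^ (θ - 1) * r⁻¹ = r ^ (θ - 2) := by
    rw [← Real.rpow_neg_one r, ← Real.rpow_add hr0]; ring_nf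
  rw [← mul_assoc, this]
end

section
/- Let γ ∈ (0, 1/2), θ := 1 + 1/(2γ), ε ∈ (0, (1−γ)/γ), c_0 > 0 and c_m ≥ 1. Then there exists a constant c(γ, ε, c_m) > 0 such that the following holds for every Δ ≥ 0: for every μ′ with c_m^{−1}·e^{γΔ} ≤ μ′ ≤ c_m·e^{γΔ}, every μ with c_m^{−1}·γ^{−1}·(e^{γΔ} − 1) ≤ μ ≤ c_m·γ^{−1}·(e^{γΔ} − 1), and every measurable G_0 : (0,∞) → ℝ with |G_0(y)| ≤ c_0·(1+γy)^{−θ−ε} for all y > 0, one has |e^{Δ/2}·(μ′)^{−1}·∫_μ^∞ (y − μ)·G_0(y) dy| ≤ c_0·c(γ, ε, c_m)·e^{−εγΔ}. -/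
open Real MeasureTheory Set
open Filter Topology
set_option maxHeartbeats 1000000

lemma rpow_tail_integral (γ p μ : ℝ) (hγ : 0 < γ) (hμ : 0 ≤ μ) (hp : 2 < p) :
    IntegrableOn (fun y : ℝ => (1 + γ * y) ^ (1 - p)) (Ioi μ) volume ∧
    ∫ y in Ioi μ, (1 + γ * y) ^ (1 - p) = (1 + γ * μ) ^ (2 - p) / (γ * (p - 2)) := by
  set g : ℝ → ℝ := fun y => -((1 + γ * y) ^ (2 - p)) / (γ * (p - 2)) with hg
  have hpos : ∀ y ∈ Ici μ, (0:ℝ) < 1 + γ * y := fun y hy => by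
    have : (0:ℝ) ≤ γ * y := mul_nonneg hγ.le (hμ.trans hy)
    linarith
  have hderiv : ∀ y ∈ Ici μ, HasDerivAt g ((1 + γ * y) ^ (1 - p)) y := by
    intro y hy
    have hb := hpos y hy
    have h1 : HasDerivAt (fun y : ℝ => 1 + γ * y) γ y := by
      simpa using ((hasDerivAt_id y).const_mul γ).const_add 1
    have h2 := (h1.rpow_const (p := 2 - p) (Or.inl hb.ne')).neg.div_const (γ * (p - 2))
    refine h2.congr_deriv (Eq.symm ?_)
    have : (2 - p - 1) = 1 - p := by ring
    rw [this, eq_div_iff (mul_pos hγ (by linarith : (0:ℝ) < p - 2)).ne']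
    ring
  have hpos' : ∀ y ∈ Ioi μ, (0:ℝ) ≤ (1 + γ * y) ^ (1 - p) := fun y hy =>
    (rpow_nonneg (hpos y (Set.Ioi_subset_Ici_self hy)).le _)
  have htend : Tendsto g atTop (𝓝 0) := by
    have h1 : Tendsto (fun y : ℝ => 1 + γ * y) atTop atTop :=
      tendsto_atTop_add_const_left _ 1 (tendsto_id.const_mul_atTop hγ)
    have h2 : Tendsto (fun x : ℝ => x ^ (2 - p)) atTop (𝓝 0) := by
      have := tendsto_rpow_neg_atTop (y := p - 2) (by linarith)
      simpa [neg_sub] using this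
    have h3 : Tendsto (fun y : ℝ => (1 + γ * y) ^ (2 - p)) atTop (𝓝 0) := h2.comp h1
    have := (h3.neg).div_const (γ * (p - 2))
    simpa using this
  refine ⟨integrableOn_Ioi_deriv_of_nonneg' hderiv hpos' htend, ?_⟩
  rw [integral_Ioi_of_hasDerivAt_of_nonneg' hderiv hpos' htend]
  simp only [hg]
  field_simp
  ring


/-- exponential decay of the first moment of an evolved initial
perturbation along characteristics: if `|G₀(y)| ≤ c₀(1+γy)^{-θ-ε}` and
`μ', μ` are comparable to `e^{γΔ}` and `γ^{-1}(e^{γΔ}-1)` respectively, then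
`|e^{Δ/2} (μ')^{-1} ∫_μ^∞ (y-μ) G₀(y) dy| ≤ c₀ c(γ,ε,c_m) e^{-εγΔ}`. -/
theorem evolved_perturbation_moment_decay
    (γ ε c0 cm : ℝ) (hγ : γ ∈ Set.Ioo (0 : ℝ) (1 / 2))
    (θ : ℝ) (hθ : θ = 1 + 1 / (2 * γ))
    (hε : ε ∈ Set.Ioo (0 : ℝ) ((1 - γ) / γ))
    (hc0 : 0 < c0) (hcm : 1 ≤ cm) :
    ∃ c > (0 : ℝ),
      ∀ Δ : ℝ, 0 ≤ Δ →
      ∀ μ' μ : ℝ,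
        cm⁻¹ * Real.exp (γ * Δ) ≤ μ' →
        μ' ≤ cm * Real.exp (γ * Δ) →
        cm⁻¹ * γ⁻¹ * (Real.exp (γ * Δ) - 1) ≤ μ →
        μ ≤ cm * γ⁻¹ * (Real.exp (γ * Δ) - 1) →
      ∀ G0 : ℝ → ℝ, Measurable G0 →
        (∀ y > (0 : ℝ), |G0 y| ≤ c0 * (1 + γ * y) ^ (-θ - ε)) →
        |Real.exp (Δ / 2) * μ'⁻¹ * ∫ y in Set.Ioi μ, (y - μ) * G0 y|
          ≤ c0 * c * Real.exp (-(ε * γ) * Δ) := by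
  obtain ⟨hγ0, hγh⟩ := hγ
  obtain ⟨hε0, hεh⟩ := hε
  have hcm0 : (0:ℝ) < cm := lt_of_lt_of_le one_pos hcm
  set p : ℝ := θ + ε with hp
  have hθ2 : 2 < θ := by
    rw [hθ]
    have h2γ : 0 < 2 * γ := by linarith
    have : 1 < 1 / (2 * γ) := by
      rw [lt_div_iff₀ h2γ]; linarith
    linarith
  have hp2 : 2 < p := by simp only [hp]; linarith
  have hps : (0:ℝ) < p - 2 := by linarith
  refine ⟨cm ^ (p - 1) / (γ ^ 2 * (p - 2)), by positivity, ?_⟩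
  intro Δ hΔ μ' μ h1 h2 h3 h4 G0 hG0m hG0b
  set E : ℝ := Real.exp (γ * Δ) with hE
  have hEpos : (0:ℝ) < E := exp_pos _
  have hE1 : (1:ℝ) ≤ E := one_le_exp (by positivity)
  have hμ0 : (0:ℝ) ≤ μ := by
    refine le_trans ?_ h3
    have : (0:ℝ) ≤ E - 1 := by linarith
    positivity
  have hμ'0 : (0:ℝ) < μ' := lt_of_lt_of_le (by positivity) h1
  obtain ⟨hInt, hVal⟩ := rpow_tail_integral γ p μ hγ0 hμ0 hp2
  -- domination
  have hbound : ∀ y ∈ Ioi μ, ‖(y - μ) * G0 y‖ ≤ c0 * γ⁻¹ * (1 + γ * y) ^ (1 - p) := by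
    intro y hy
    have hyμ : μ < y := hy
    have hy0 : 0 < y := lt_of_le_of_lt hμ0 hyμ
    have hb : (0:ℝ) < 1 + γ * y := by nlinarith
    have hG := hG0b y hy0
    have hexp : (-θ - ε : ℝ) = -p := by simp only [hp]; ring
    rw [hexp] at hG
    have h1' : ‖(y - μ) * G0 y‖ = (y - μ) * |G0 y| := by
      rw [Real.norm_eq_abs, abs_mul, abs_of_nonneg (by linarith : (0:ℝ) ≤ y - μ)]
    rw [h1']
    have hsub : y - μ ≤ γ⁻¹ * (1 + γ * y) := by
      rw [inv_mul_eq_div, le_div_iff₀ hγ0]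
      nlinarith
    calc (y - μ) * |G0 y| ≤ (y - μ) * (c0 * (1 + γ * y) ^ (-p)) := by
          apply mul_le_mul_of_nonneg_left hG (by linarith)
      _ ≤ (γ⁻¹ * (1 + γ * y)) * (c0 * (1 + γ * y) ^ (-p)) := by
          apply mul_le_mul_of_nonneg_right hsub (by positivity)
      _ = c0 * γ⁻¹ * ((1 + γ * y) * (1 + γ * y) ^ (-p)) := by ring
      _ = c0 * γ⁻¹ * (1 + γ * y) ^ (1 - p) := by
          rw [show (1 - p : ℝ) = 1 + (-p) by ring, Real.rpow_add hb, Real.rpow_one]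
  have hDint : IntegrableOn (fun y : ℝ => c0 * γ⁻¹ * (1 + γ * y) ^ (1 - p)) (Ioi μ) volume :=
    hInt.const_mul _
  have hnorm : ‖∫ y in Ioi μ, (y - μ) * G0 y‖
      ≤ ∫ y in Ioi μ, c0 * γ⁻¹ * (1 + γ * y) ^ (1 - p) := by
    apply norm_integral_le_of_norm_le hDint
    exact (ae_restrict_iff' measurableSet_Ioi).mpr (ae_of_all _ hbound)
  have hDval : ∫ y in Ioi μ, c0 * γ⁻¹ * (1 + γ * y) ^ (1 - p)
      = c0 * γ⁻¹ * ((1 + γ * μ) ^ (2 - p) / (γ * (p - 2))) := by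
    rw [MeasureTheory.integral_const_mul, hVal]
  -- comparison bounds
  have h5 : μ'⁻¹ ≤ cm * E⁻¹ := by
    have := inv_anti₀ (by positivity : (0:ℝ) < cm⁻¹ * E) h1
    rwa [mul_inv, inv_inv] at this
  have hcmE : cm⁻¹ * E ≤ 1 + γ * μ := by
    have hinv1 : cm⁻¹ ≤ 1 := inv_le_one_of_one_le₀ hcm
    have h3' : γ * (cm⁻¹ * γ⁻¹ * (E - 1)) ≤ γ * μ := mul_le_mul_of_nonneg_left h3 hγ0.le
    have heq : γ * (cm⁻¹ * γ⁻¹ * (E - 1)) = cm⁻¹ * (E - 1) := by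
      field_simp
    rw [heq] at h3'
    have : cm⁻¹ * (E - 1) = cm⁻¹ * E - cm⁻¹ := by ring
    linarith [this ▸ h3']
  have h6 : (1 + γ * μ) ^ (2 - p) ≤ (cm⁻¹ * E) ^ (2 - p) :=
    Real.rpow_le_rpow_of_nonpos (by positivity) hcmE (by linarith)
  -- exponential algebra
  have e1 : (cm⁻¹ * E) ^ (2 - p) = cm ^ (p - 2) * Real.exp (γ * Δ * (2 - p)) := by
    rw [Real.mul_rpow (by positivity) hEpos.le, Real.inv_rpow hcm0.le,
      ← Real.rpow_neg hcm0.le, show (-(2 - p) : ℝ) = p - 2 by ring, hE, ← Real.exp_mul]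
  have e2 : cm * cm ^ (p - 2) = cm ^ (p - 1) := by
    nth_rewrite 1 [show cm = cm ^ (1:ℝ) by rw [Real.rpow_one]]
    rw [← Real.rpow_add hcm0, show (1:ℝ) + (p - 2) = p - 1 by ring]
  have e3 : Real.exp (Δ / 2) * E⁻¹ * Real.exp (γ * Δ * (2 - p)) = Real.exp (-(ε * γ) * Δ) := by
    rw [hE, ← Real.exp_neg, ← Real.exp_add, ← Real.exp_add]
    congr 1
    simp only [hp, hθ]
    field_simp
    ring
  have key : Real.exp (Δ / 2) * (cm * E⁻¹) * (c0 * γ⁻¹ * ((cm⁻¹ * E) ^ (2 - p) / (γ * (p - 2))))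
      = c0 * (cm ^ (p - 1) / (γ ^ 2 * (p - 2))) * Real.exp (-(ε * γ) * Δ) := by
    rw [e1, ← e2, ← e3]
    field_simp
  -- final chain
  calc |Real.exp (Δ / 2) * μ'⁻¹ * ∫ y in Set.Ioi μ, (y - μ) * G0 y|
      = Real.exp (Δ / 2) * μ'⁻¹ * |∫ y in Set.Ioi μ, (y - μ) * G0 y| := by
        rw [abs_mul, abs_mul, abs_of_pos (exp_pos _), abs_of_pos (inv_pos.mpr hμ'0)]
    _ ≤ Real.exp (Δ / 2) * μ'⁻¹ * (c0 * γ⁻¹ * ((1 + γ * μ) ^ (2 - p) / (γ * (p - 2)))) := by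
        apply mul_le_mul_of_nonneg_left _ (by positivity)
        rw [← Real.norm_eq_abs, ← hDval]
        exact hnorm
    _ ≤ Real.exp (Δ / 2) * (cm * E⁻¹) * (c0 * γ⁻¹ * ((cm⁻¹ * E) ^ (2 - p) / (γ * (p - 2)))) := by
        have hA : Real.exp (Δ / 2) * μ'⁻¹ ≤ Real.exp (Δ / 2) * (cm * E⁻¹) :=
          mul_le_mul_of_nonneg_left h5 (exp_pos _).le
        have hB : c0 * γ⁻¹ * ((1 + γ * μ) ^ (2 - p) / (γ * (p - 2)))
            ≤ c0 * γ⁻¹ * ((cm⁻¹ * E) ^ (2 - p) / (γ * (p - 2))) := by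
          apply mul_le_mul_of_nonneg_left _ (by positivity)
          exact (div_le_div_iff_of_pos_right (by positivity : (0:ℝ) < γ * (p - 2))).mpr h6
        exact mul_le_mul hA hB (by positivity) (by positivity)
    _ = c0 * (cm ^ (p - 1) / (γ ^ 2 * (p - 2))) * Real.exp (-(ε * γ) * Δ) := key
end
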